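/- arXiv:math/0209326 — 7 statements merged into one kernel-verified Lean document; each statement's English description precedes it below -/
import Mathlib

section
/- For any positive integers p and q there exists an integer m such that for every r ≥ 1 there is a set M of integer p×q×r arrays, each having all line sums zero in the three coordinate directions and having at most m nonzero slices T(·,·,k), with the property that any two nonnegative integer p×q×r arrays having the same three two-dimensional margins are connected by a sequence of nonnegative integer arrays whose consecutive differences lie in M ∪ (−M). -/
open Finset

section Helpers

/-- `a` lies between `0` and `b` (sign-compatible subordination of integers). -/
def IntComp (a b : ℤ) : Prop := (0 ≤ a ∧ a ≤ b) ∨ (b ≤ a ∧ a ≤ 0)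

lemma intComp_zero (b : ℤ) : IntComp 0 b := by unfold IntComp; omega

lemma intComp_trans {a b c : ℤ} (h1 : IntComp a b) (h2 : IntComp b c) : IntComp a c := by
  unfold IntComp at *; omega

lemma intComp_sub {n m : ℤ} (h : IntComp n m) : IntComp (m - n) m := by
  unfold IntComp at *; omega

lemma multiset_sum_nonpos {s : Multiset ℤ} (h : ∀ a ∈ s, a ≤ 0) : s.sum ≤ 0 := by
  induction s using Multiset.induction_on with
  | empty => simp
  | cons a s ih =>
    rw [Multiset.sum_cons]
    have := h a (Multiset.mem_cons_self a s)
    have := ih fun b hb => h b (Multiset.mem_cons_of_mem hb)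
    omega

lemma intComp_sum {b : ℤ} {t s : Multiset ℤ} (hts : t ≤ s) (hsum : s.sum = b)
    (h : ∀ a ∈ s, IntComp a b) : IntComp t.sum b := by
  obtain ⟨u, rfl⟩ := Multiset.le_iff_exists_add.1 hts
  rw [Multiset.sum_add] at hsum
  rcases le_or_gt 0 b with hb | hb
  · have ht0 : 0 ≤ t.sum :=
      Multiset.sum_nonneg fun a ha => by
        have := h a (Multiset.mem_add.2 (Or.inl ha)); unfold IntComp at this; omega
    have hu0 : 0 ≤ u.sum :=
      Multiset.sum_nonneg fun a ha => by
        have := h a (Multiset.mem_add.2 (Or.inr ha)); unfold IntComp at this; omega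
    unfold IntComp; omega
  · have ht0 : t.sum ≤ 0 :=
      multiset_sum_nonpos fun a ha => by
        have := h a (Multiset.mem_add.2 (Or.inl ha)); unfold IntComp at this; omega
    have hu0 : u.sum ≤ 0 :=
      multiset_sum_nonpos fun a ha => by
        have := h a (Multiset.mem_add.2 (Or.inr ha)); unfold IntComp at this; omega
    unfold IntComp; omega


end Helpers

abbrev Mat (p q : ℕ) := Fin p → Fin q → ℤ

def ZeroMargin {p q : ℕ} (M : Mat p q) : Prop :=
  (∀ i, ∑ j, M i j = 0) ∧ (∀ j, ∑ i, M i j = 0)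


section Cycle

variable {p q : ℕ} {M : Mat p q}

lemma exists_pos_of_sum_zero {n : ℕ} {f : Fin n → ℤ} (h0 : ∑ i, f i = 0) {i : Fin n}
    (hi : f i < 0) : ∃ j, 0 < f j := by
  by_contra hc
  push_neg at hc
  have : ∑ j, f j < ∑ j, (0 : ℤ) :=
    Finset.sum_lt_sum (fun j _ => hc j) ⟨i, Finset.mem_univ i, hi⟩
  simp [h0] at this

lemma exists_neg_of_sum_zero {n : ℕ} {f : Fin n → ℤ} (h0 : ∑ i, f i = 0) {i : Fin n}
    (hi : 0 < f i) : ∃ j, f j < 0 := by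
  by_contra hc
  push_neg at hc
  have : ∑ j, (0 : ℤ) < ∑ j, f j :=
    Finset.sum_lt_sum (fun j _ => hc j) ⟨i, Finset.mem_univ i, hi⟩
  simp [h0] at this

lemma telescope (g : ℕ → ℤ) {a b : ℕ} (h : a ≤ b) :
    ∑ t ∈ Finset.Ico a b, (g t - g (t + 1)) = g a - g b := by
  induction b, h using Nat.le_induction with
  | base => simp
  | succ b hb ih => rw [Finset.sum_Ico_succ_top hb, ih]; ring

lemma sum_ind_row (c : Fin p × Fin q) (i : Fin p) :
    ∑ j, (if c = (i, j) then (1 : ℤ) else 0) = if c.1 = i then 1 else 0 := by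
  rcases c with ⟨ci, cj⟩
  by_cases h : ci = i
  · subst h
    simp [Prod.ext_iff]
  · simp [Prod.ext_iff, h]

lemma sum_ind_col (c : Fin p × Fin q) (j : Fin q) :
    ∑ i, (if c = (i, j) then (1 : ℤ) else 0) = if c.2 = j then 1 else 0 := by
  rcases c with ⟨ci, cj⟩
  by_cases h : cj = j
  · subst h
    simp [Prod.ext_iff]
  · simp [Prod.ext_iff, h]

lemma exists_cycle (hM : ZeroMargin M) (hne : M ≠ 0) :
    ∃ N : Mat p q, ZeroMargin N ∧ N ≠ 0 ∧
      ∀ i j, IntComp (N i j) (M i j) ∧ N i j ≤ 1 ∧ -1 ≤ N i j := by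
  classical
  -- a positive entry exists
  have hpos : ∃ c : Fin p × Fin q, 0 < M c.1 c.2 := by
    have : ∃ i j, M i j ≠ 0 := by
      by_contra hc
      push_neg at hc
      exact hne (funext fun i => funext fun j => hc i j)
    obtain ⟨i, j, hij⟩ := this
    rcases lt_or_gt_of_ne hij with hlt | hgt
    · obtain ⟨j', hj'⟩ := exists_pos_of_sum_zero (hM.1 i) hlt
      exact ⟨(i, j'), hj'⟩
    · exact ⟨(i, j), hgt⟩
  -- step functions
  have hsn : ∀ x : {c : Fin p × Fin q // 0 < M c.1 c.2},
      ∃ y : {c : Fin p × Fin q // M c.1 c.2 < 0}, y.1.2 = x.1.2 := by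
    rintro ⟨⟨i, j⟩, hx⟩
    obtain ⟨i', hi'⟩ := exists_neg_of_sum_zero (hM.2 j) hx
    exact ⟨⟨(i', j), hi'⟩, rfl⟩
  have hsp : ∀ y : {c : Fin p × Fin q // M c.1 c.2 < 0},
      ∃ x : {c : Fin p × Fin q // 0 < M c.1 c.2}, x.1.1 = y.1.1 := by
    rintro ⟨⟨i, j⟩, hy⟩
    obtain ⟨j', hj'⟩ := exists_pos_of_sum_zero (hM.1 i) hy
    exact ⟨⟨(i, j'), hj'⟩, rfl⟩
  choose stepN hstepN using hsn
  choose stepP hstepP using hsp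
  obtain ⟨c0, hc0⟩ := hpos
  set seq : ℕ → {c : Fin p × Fin q // 0 < M c.1 c.2} :=
    fun t => (stepP ∘ stepN)^[t] ⟨c0, hc0⟩ with hseq
  have hseqsucc : ∀ t, seq (t + 1) = stepP (stepN (seq t)) := by
    intro t
    show (stepP ∘ stepN)^[t + 1] ⟨c0, hc0⟩ = stepP (stepN ((stepP ∘ stepN)^[t] ⟨c0, hc0⟩))
    rw [Function.iterate_succ_apply']
    rfl
  -- pigeonhole
  obtain ⟨a1, b1, hne1, heq1⟩ := Finite.exists_ne_map_eq_of_infinite seq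
  have hex : ∃ b, ∃ a, a < b ∧ seq a = seq b := by
    rcases lt_or_gt_of_ne hne1 with h | h
    · exact ⟨b1, a1, h, heq1⟩
    · exact ⟨a1, b1, h, heq1.symm⟩
  obtain ⟨a0, ha0lt, ha0eq⟩ := Nat.find_spec hex
  set b0 := Nat.find hex with hb0
  have hinj : ∀ s t, s < t → t < b0 → seq s ≠ seq t := by
    intro s t hst htb heq
    exact Nat.find_min hex htb ⟨s, hst, heq⟩
  set y : ℕ → {c : Fin p × Fin q // M c.1 c.2 < 0} := fun t => stepN (seq t) with hy
  have hycol : ∀ t, (y t).1.2 = (seq t).1.2 := fun t => hstepN _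
  have hyrow : ∀ t, (seq (t + 1)).1.1 = (y t).1.1 := by
    intro t; rw [hseqsucc t]; exact hstepP _
  have hyinj : ∀ s t, a0 ≤ s → s < t → t < b0 → y s ≠ y t := by
    intro s t has hst htb heq
    have hnext : seq (s + 1) = seq (t + 1) := by
      rw [hseqsucc, hseqsucc]
      exact congrArg stepP heq
    rcases eq_or_lt_of_le (Nat.succ_le_of_lt htb) with hb | hb
    · -- t + 1 = b0
      have hta : seq (s + 1) = seq a0 := by
        rw [hnext, show t + 1 = b0 from hb]
        exact ha0eq.symm
      exact hinj a0 (s + 1) (by omega) (by omega) hta.symm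
    · exact hinj (s + 1) (t + 1) (by omega) hb hnext
  -- the cycle matrix
  set N : Mat p q := fun i j => ∑ t ∈ Finset.Ico a0 b0,
    ((if (seq t).1 = (i, j) then (1 : ℤ) else 0) - (if (y t).1 = (i, j) then (1 : ℤ) else 0))
    with hN
  -- count bounds for indicator sums
  have hS1 : ∀ i j, (0 ≤ ∑ t ∈ Finset.Ico a0 b0, (if (seq t).1 = (i, j) then (1 : ℤ) else 0)) ∧
      (∑ t ∈ Finset.Ico a0 b0, (if (seq t).1 = (i, j) then (1 : ℤ) else 0)) ≤ 1 := by
    intro i j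
    constructor
    · exact Finset.sum_nonneg fun t _ => by positivity
    · rw [Finset.sum_boole]
      have : ((Finset.Ico a0 b0).filter fun t => (seq t).1 = (i, j)).card ≤ 1 := by
        apply Finset.card_le_one.2
        intro s hs t ht
        simp only [Finset.mem_filter, Finset.mem_Ico] at hs ht
        have : seq s = seq t := Subtype.ext (hs.2.trans ht.2.symm)
        rcases lt_trichotomy s t with h | h | h
        · exact absurd this (hinj s t h ht.1.2)
        · exact h
        · exact absurd this.symm (hinj t s h hs.1.2)
      exact_mod_cast this
  have hS2 : ∀ i j, (0 ≤ ∑ t ∈ Finset.Ico a0 b0, (if (y t).1 = (i, j) then (1 : ℤ) else 0)) ∧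
      (∑ t ∈ Finset.Ico a0 b0, (if (y t).1 = (i, j) then (1 : ℤ) else 0)) ≤ 1 := by
    intro i j
    constructor
    · exact Finset.sum_nonneg fun t _ => by positivity
    · rw [Finset.sum_boole]
      have : ((Finset.Ico a0 b0).filter fun t => (y t).1 = (i, j)).card ≤ 1 := by
        apply Finset.card_le_one.2
        intro s hs t ht
        simp only [Finset.mem_filter, Finset.mem_Ico] at hs ht
        have : y s = y t := Subtype.ext (hs.2.trans ht.2.symm)
        rcases lt_trichotomy s t with h | h | h
        · exact absurd this (hyinj s t hs.1.1 h ht.1.2)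
        · exact h
        · exact absurd this.symm (hyinj t s ht.1.1 h hs.1.2)
      exact_mod_cast this
  have hS1zero : ∀ i j, M i j ≤ 0 →
      (∑ t ∈ Finset.Ico a0 b0, (if (seq t).1 = (i, j) then (1 : ℤ) else 0)) = 0 := by
    intro i j hM0
    apply Finset.sum_eq_zero
    intro t _
    have := (seq t).2
    rw [if_neg]
    intro hc
    rw [hc] at this
    simp at this
    omega
  have hS2zero : ∀ i j, 0 ≤ M i j →
      (∑ t ∈ Finset.Ico a0 b0, (if (y t).1 = (i, j) then (1 : ℤ) else 0)) = 0 := by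
    intro i j hM0
    apply Finset.sum_eq_zero
    intro t _
    have := (y t).2
    rw [if_neg]
    intro hc
    rw [hc] at this
    simp at this
    omega
  have hNsplit : ∀ i j, N i j =
      (∑ t ∈ Finset.Ico a0 b0, (if (seq t).1 = (i, j) then (1 : ℤ) else 0)) -
      (∑ t ∈ Finset.Ico a0 b0, (if (y t).1 = (i, j) then (1 : ℤ) else 0)) := by
    intro i j
    simp only [hN]
    rw [Finset.sum_sub_distrib]
  refine ⟨N, ⟨?_, ?_⟩, ?_, ?_⟩
  · -- row sums
    intro i
    have : ∀ t, ((if (y t).1.1 = i then (1:ℤ) else 0)) = (if (seq (t+1)).1.1 = i then 1 else 0) := by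
      intro t; rw [hyrow t]
    calc ∑ j, N i j = ∑ t ∈ Finset.Ico a0 b0,
        ((if (seq t).1.1 = i then (1:ℤ) else 0) - (if (seq (t+1)).1.1 = i then 1 else 0)) := by
          simp only [hN]
          rw [Finset.sum_comm]
          apply Finset.sum_congr rfl
          intro t _
          rw [Finset.sum_sub_distrib, sum_ind_row, sum_ind_row, this t]
      _ = 0 := by
          rw [telescope (fun t => if (seq t).1.1 = i then (1:ℤ) else 0) (le_of_lt ha0lt)]
          rw [ha0eq]; ring
  · -- column sums
    intro j
    simp only [hN]
    rw [Finset.sum_comm]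
    apply Finset.sum_eq_zero
    intro t _
    rw [Finset.sum_sub_distrib, sum_ind_col, sum_ind_col, hycol t]
    ring
  · -- N ≠ 0
    intro h0
    have h1 : N (seq a0).1.1 (seq a0).1.2 = 0 := by rw [h0]; rfl
    have h2 : (1:ℤ) ≤ ∑ t ∈ Finset.Ico a0 b0,
        (if (seq t).1 = ((seq a0).1.1, (seq a0).1.2) then (1 : ℤ) else 0) := by
      have ha0mem : a0 ∈ Finset.Ico a0 b0 := Finset.mem_Ico.2 ⟨le_refl _, ha0lt⟩
      calc (1:ℤ) = (if (seq a0).1 = ((seq a0).1.1, (seq a0).1.2) then (1 : ℤ) else 0) := by simp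
        _ ≤ _ := Finset.single_le_sum (f := fun t => if (seq t).1 = ((seq a0).1.1, (seq a0).1.2)
              then (1 : ℤ) else 0) (fun t _ => by positivity) ha0mem
    have h3 := hS2zero (seq a0).1.1 (seq a0).1.2 (le_of_lt (seq a0).2)
    rw [hNsplit, h3] at h1
    omega
  · -- entries
    intro i j
    rcases lt_trichotomy (M i j) 0 with hm | hm | hm
    · have h1 := hS1zero i j (le_of_lt hm)
      have h2 := hS2 i j
      rw [hNsplit, h1]
      unfold IntComp
      omega
    · have h1 := hS1zero i j (hm.le)
      have h2 := hS2zero i j hm.ge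
      rw [hNsplit, h1, h2]
      unfold IntComp
      omega
    · have h1 := hS2zero i j (le_of_lt hm)
      have h2 := hS1 i j
      rw [hNsplit, h1]
      unfold IntComp
      omega

end Cycle

abbrev Code (p q : ℕ) := Fin p → Fin q → Fin 3

def decode {p q : ℕ} (c : Code p q) : Mat p q := fun i j => ((c i j : ℕ) : ℤ) - 1

section Decompose

variable {p q : ℕ}

lemma decompose : ∀ (n : ℕ) (M : Mat p q), (∑ i, ∑ j, (M i j).natAbs) ≤ n → ZeroMargin M →
    ∃ L : Multiset (Code p q), (L.map decode).sum = M ∧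
      ∀ c ∈ L, ZeroMargin (decode c) ∧ ∀ i j, IntComp (decode c i j) (M i j) := by
  intro n
  induction n with
  | zero =>
    intro M hn _
    have hM0 : M = 0 := by
      have h0 : ∑ i, ∑ j, (M i j).natAbs = 0 := Nat.le_zero.1 hn
      funext i j
      have hi := (Finset.sum_eq_zero_iff.1 h0) i (mem_univ i)
      have hj := (Finset.sum_eq_zero_iff.1 hi) j (mem_univ j)
      simpa using Int.natAbs_eq_zero.1 hj
    exact ⟨0, by simp [hM0], by simp⟩
  | succ n ih =>
    intro M hn hM
    by_cases h0 : M = 0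
    · exact ⟨0, by simp [h0], by simp⟩
    obtain ⟨N, hNzm, hNne, hNent⟩ := exists_cycle hM h0
    have hcode : ∃ c : Code p q, decode c = N := by
      refine ⟨fun i j => ⟨(N i j + 1).toNat, by have := hNent i j; omega⟩, ?_⟩
      funext i j
      have := hNent i j
      simp only [decode]
      omega
    obtain ⟨c0, hc0⟩ := hcode
    set M' : Mat p q := M - N with hM'
    have hM'app : ∀ i j, M' i j = M i j - N i j := fun i j => rfl
    have hM'zm : ZeroMargin M' := by
      constructor
      · intro i
        simp only [hM'app]
        rw [Finset.sum_sub_distrib, hM.1 i, hNzm.1 i]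
        ring
      · intro j
        simp only [hM'app]
        rw [Finset.sum_sub_distrib, hM.2 j, hNzm.2 j]
        ring
    have hnm : ∑ i, ∑ j, (M' i j).natAbs < ∑ i, ∑ j, (M i j).natAbs := by
      obtain ⟨i0, j0, hN0⟩ : ∃ i j, N i j ≠ 0 := by
        by_contra hc
        push_neg at hc
        exact hNne (funext fun i => funext fun j => hc i j)
      refine Finset.sum_lt_sum (fun i _ => Finset.sum_le_sum fun j _ => ?_)
        ⟨i0, mem_univ i0, ?_⟩
      · have h := (hNent i j).1
        rw [hM'app]
        unfold IntComp at h
        omega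
      · refine Finset.sum_lt_sum (fun j _ => ?_) ⟨j0, mem_univ j0, ?_⟩
        · have h := (hNent i0 j).1
          rw [hM'app]
          unfold IntComp at h
          omega
        · have h := (hNent i0 j0).1
          rw [hM'app]
          unfold IntComp at h
          omega
    obtain ⟨L', hL'sum, hL'mem⟩ := ih M' (by omega) hM'zm
    refine ⟨c0 ::ₘ L', ?_, ?_⟩
    · rw [Multiset.map_cons, Multiset.sum_cons, hL'sum, hc0]
      funext i j
      simp only [Pi.add_apply, hM'app]
      ring
    · intro c hc
      rcases Multiset.mem_cons.1 hc with hx | hx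
      · subst hx
        rw [hc0]
        exact ⟨hNzm, fun i j => (hNent i j).1⟩
      · refine ⟨(hL'mem c hx).1, fun i j => ?_⟩
        have h1 := (hL'mem c hx).2 i j
        have h2 := intComp_sub (hNent i j).1
        rw [hM'app] at h1
        exact intComp_trans h1 h2

end Decompose

section Hilbert

variable (p q : ℕ)

lemma hilbert : ∃ m₀ : ℕ, ∀ μ : Code p q → ℕ, (∑ c, μ c • decode c = (0 : Mat p q)) → μ ≠ 0 →
    ∃ ν : Code p q → ℕ, (∀ c, ν c ≤ μ c) ∧ ν ≠ 0 ∧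
      (∑ c, ν c • decode c = (0 : Mat p q)) ∧ (∑ c, ν c) ≤ m₀ := by
  classical
  set S : Set (Code p q → ℕ) := {μ | μ ≠ 0 ∧ ∑ c, μ c • decode c = (0 : Mat p q)} with hS
  set Min : Set (Code p q → ℕ) := {μ ∈ S | ∀ ν ∈ S, ν ≤ μ → ν = μ} with hMin
  have hanti : IsAntichain (· ≤ ·) Min := by
    intro μ hμ ν hν hne hle
    exact hne (hν.2 μ hμ.1 hle)
  have hfin : Min.Finite := hanti.finite_of_partiallyWellOrderedOn
    (Set.isPWO_of_wellQuasiOrderedLE Min)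
  refine ⟨hfin.toFinset.sup (fun ν => ∑ c, ν c), ?_⟩
  have descend : ∀ (n : ℕ) (μ : Code p q → ℕ), (∑ c, μ c) ≤ n → μ ∈ S →
      ∃ ν ∈ Min, ν ≤ μ := by
    intro n
    induction n with
    | zero =>
      intro μ hn hμ
      exfalso
      apply hμ.1
      funext c
      have := (Finset.sum_eq_zero_iff.1 (Nat.le_zero.1 hn)) c (mem_univ c)
      simpa using this
    | succ n ih =>
      intro μ hn hμ
      by_cases hmin : ∀ ν ∈ S, ν ≤ μ → ν = μ
      · exact ⟨μ, ⟨hμ, hmin⟩, le_refl μ⟩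
      · push_neg at hmin
        obtain ⟨ν, hνS, hνle, hνne⟩ := hmin
        have hlt : ∑ c, ν c < ∑ c, μ c := by
          obtain ⟨c0, hc0⟩ : ∃ c, ν c ≠ μ c := by
            by_contra hc
            push_neg at hc
            exact hνne (funext hc)
          exact Finset.sum_lt_sum (fun c _ => hνle c)
            ⟨c0, mem_univ c0, lt_of_le_of_ne (hνle c0) hc0⟩
        obtain ⟨ρ, hρMin, hρle⟩ := ih ν (by omega) hνS
        exact ⟨ρ, hρMin, le_trans hρle hνle⟩
  intro μ hsum hμne
  obtain ⟨ν, hνMin, hνle⟩ := descend (∑ c, μ c) μ le_rfl ⟨hμne, hsum⟩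
  refine ⟨ν, fun c => hνle c, hνMin.1.1, hνMin.1.2, ?_⟩
  exact Finset.le_sup (hfin.mem_toFinset.2 hνMin)

end Hilbert

section MultisetHelpers

variable {α β ι : Type*}

lemma multiset_sum_apply {γ : Type*} {δ : γ → Type*} [∀ a, AddCommMonoid (δ a)]
    (s : Multiset (∀ a, δ a)) (a : γ) : s.sum a = (s.map fun f => f a).sum := by
  induction s using Multiset.induction_on with
  | empty => simp
  | cons f s ih => simp [ih]

lemma list_sum_apply {γ : Type*} {δ : γ → Type*} [∀ a, AddCommMonoid (δ a)]
    (l : List (∀ a, δ a)) (a : γ) : l.sum a = (l.map fun f => f a).sum := by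
  induction l with
  | nil => simp
  | cons f l ih => simp [ih]

lemma multiset_map_sum_count [Fintype α] [DecidableEq α] [AddCommMonoid β]
    (s : Multiset α) (f : α → β) : (s.map f).sum = ∑ a, (s.count a) • f a := by
  induction s using Multiset.induction_on with
  | empty => simp
  | cons a s ih =>
    rw [Multiset.map_cons, Multiset.sum_cons, ih]
    have : ∀ b : α, (Multiset.count b (a ::ₘ s)) • f b
        = (Multiset.count b s) • f b + (if b = a then f b else 0) := by
      intro b
      rw [Multiset.count_cons]
      by_cases h : b = a <;> simp [h, add_smul]
    rw [Finset.sum_congr rfl fun b _ => this b, Finset.sum_add_distrib]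
    have h2 : ∑ b, (if b = a then f b else 0) = f a := by simp
    rw [h2]
    abel

lemma exists_le_map [DecidableEq β] :
    ∀ (P : Multiset α) (s : Multiset β) (f : α → β), s ≤ P.map f → ∃ t ≤ P, t.map f = s := by
  intro P
  induction P using Multiset.induction_on with
  | empty =>
    intro s f hs
    rw [Multiset.map_zero, Multiset.le_zero] at hs
    exact ⟨0, le_refl _, by simp [hs]⟩
  | cons a P ih =>
    intro s f hs
    rw [Multiset.map_cons] at hs
    by_cases hfa : f a ∈ s
    · obtain ⟨t', ht'le, ht'map⟩ := ih (s.erase (f a)) f (Multiset.erase_le_iff_le_cons.2 hs)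
      refine ⟨a ::ₘ t', Multiset.cons_le_cons a ht'le, ?_⟩
      rw [Multiset.map_cons, ht'map, Multiset.cons_erase hfa]
    · have hle : s ≤ P.map f := by
        rw [Multiset.le_iff_count]
        intro b
        have := Multiset.le_iff_count.1 hs b
        rw [Multiset.count_cons] at this
        by_cases hb : b = f a
        · have h0 : s.count b = 0 := by
            rw [hb]
            exact Multiset.count_eq_zero_of_notMem hfa
          omega
        · simp only [if_neg hb] at this
          omega
      obtain ⟨t', ht'le, ht'map⟩ := ih s f hle
      exact ⟨t', le_trans ht'le (Multiset.le_cons_self P a), ht'map⟩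

lemma card_finset_sum {ι γ : Type*} (s : Finset ι) (f : ι → Multiset γ) :
    Multiset.card (∑ i ∈ s, f i) = ∑ i ∈ s, Multiset.card (f i) := by
  induction s using Finset.cons_induction <;> simp [*]

lemma mem_list_sum_le {l : List (Multiset α)} {G : Multiset α} (h : G ∈ l) : G ≤ l.sum := by
  induction l with
  | nil => simp at h
  | cons a l ih =>
    rcases List.mem_cons.1 h with rfl | h'
    · rw [List.sum_cons]; exact Multiset.le_add_right _ _
    · rw [List.sum_cons]; exact le_trans (ih h') (Multiset.le_add_left _ _)

end MultisetHelpers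

section Grouping

variable {p q r : ℕ}

lemma grouping (m₀ : ℕ)
    (hH : ∀ μ : Code p q → ℕ, (∑ c, μ c • decode c = (0 : Mat p q)) → μ ≠ 0 →
      ∃ ν : Code p q → ℕ, (∀ c, ν c ≤ μ c) ∧ ν ≠ 0 ∧
        (∑ c, ν c • decode c = (0 : Mat p q)) ∧ (∑ c, ν c) ≤ m₀) :
    ∀ (n : ℕ) (P : Multiset (Fin r × Code p q)), P.card ≤ n →
      (P.map fun x => decode x.2).sum = (0 : Mat p q) →
      ∃ Gs : List (Multiset (Fin r × Code p q)), Gs.sum = P ∧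
        ∀ G ∈ Gs, (G.map fun x => decode x.2).sum = (0 : Mat p q) ∧ G.card ≤ m₀ := by
  classical
  intro n
  induction n with
  | zero =>
    intro P hc _
    have : P = 0 := Multiset.card_eq_zero.1 (Nat.le_zero.1 hc)
    exact ⟨[], by simp [this], by simp⟩
  | succ n ih =>
    intro P hc hsum
    by_cases hP : P = 0
    · exact ⟨[], by simp [hP], by simp⟩
    set s : Multiset (Code p q) := P.map Prod.snd with hs
    set μ : Code p q → ℕ := fun c => s.count c with hμ
    have hμsum : ∑ c, μ c • decode c = (0 : Mat p q) := by
      rw [← multiset_map_sum_count s decode, hs, Multiset.map_map]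
      exact hsum
    have hμne : μ ≠ 0 := by
      obtain ⟨x, hx⟩ := Multiset.exists_mem_of_ne_zero hP
      intro h0
      have h1 : μ x.2 = 0 := congrFun h0 x.2
      have h2 : 0 < Multiset.count x.2 s := Multiset.count_pos.2 (Multiset.mem_map_of_mem Prod.snd hx)
      have h3 : μ x.2 = Multiset.count x.2 s := rfl
      omega
    obtain ⟨ν, hνle, hνne, hνsum, hνcard⟩ := hH μ hμsum hμne
    set νhat : Multiset (Code p q) := ∑ c, Multiset.replicate (ν c) c with hνhat
    have hcount : ∀ c, νhat.count c = ν c := by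
      intro c
      rw [hνhat, Multiset.count_sum']
      simp [Multiset.count_replicate]
    have hνhatle : νhat ≤ s := by
      rw [Multiset.le_iff_count]
      intro c
      rw [hcount c]
      exact hνle c
    obtain ⟨t, htle, htmap⟩ := exists_le_map P νhat Prod.snd hνhatle
    have htsum : (t.map fun x => decode x.2).sum = (0 : Mat p q) := by
      have : (t.map fun x => decode x.2) = νhat.map decode := by
        rw [← htmap, Multiset.map_map]
        rfl
      rw [this, multiset_map_sum_count]
      rw [Finset.sum_congr rfl fun c _ => by rw [hcount c]]
      exact hνsum
    have htcard : t.card = ∑ c, ν c := by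
      have h1 : t.card = νhat.card := by rw [← htmap, Multiset.card_map]
      rw [h1, hνhat, card_finset_sum]
      exact Finset.sum_congr rfl fun c _ => Multiset.card_replicate _ _
    have htne : t ≠ 0 := by
      intro h0
      apply hνne
      funext c
      have := hcount c
      rw [← htmap, h0] at this
      simpa using this.symm
    have hcard' : (P - t).card ≤ n := by
      have h1 : (P - t).card = P.card - t.card := Multiset.card_sub htle
      have h2 : 0 < t.card := Multiset.card_pos.2 htne
      omega
    have hPsplit : P - t + t = P := tsub_add_cancel_of_le htle
    have hsum' : ((P - t).map fun x => decode x.2).sum = (0 : Mat p q) := by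
      have := hsum
      rw [← hPsplit, Multiset.map_add, Multiset.sum_add] at this
      rw [htsum, add_zero] at this
      exact this
    obtain ⟨Gs', hGs'sum, hGs'mem⟩ := ih (P - t) hcard' hsum'
    refine ⟨t :: Gs', ?_, ?_⟩
    · rw [List.sum_cons, hGs'sum, add_comm, hPsplit]
    · intro G hG
      rcases List.mem_cons.1 hG with rfl | hG'
      · exact ⟨htsum, by omega⟩
      · exact hGs'mem G hG'

end Grouping

section SumHelpers

lemma msum_entry {p q : ℕ} (s : Multiset (Mat p q)) (i : Fin p) (j : Fin q) :
    s.sum i j = (s.map fun M => M i j).sum := by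
  induction s using Multiset.induction_on with
  | empty => simp
  | cons a s ih => simp [ih]

lemma lsum_entry3 {p q r : ℕ} (l : List (Fin p → Fin q → Fin r → ℤ)) (i : Fin p) (j : Fin q)
    (k : Fin r) : l.sum i j k = (l.map fun T => T i j k).sum := by
  induction l with
  | nil => simp
  | cons a l ih => simp [ih]

lemma map_finsum_sum {ι γ β : Type*} [AddCommMonoid β] (s : Finset ι) (g : ι → Multiset γ)
    (f : γ → β) : ((∑ i ∈ s, g i).map f).sum = ∑ i ∈ s, ((g i).map f).sum := by
  induction s using Finset.cons_induction <;> simp [*]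

lemma map_listsum_sum {γ β : Type*} [AddCommMonoid β] (l : List (Multiset γ)) (f : γ → β) :
    ((l.sum).map f).sum = (l.map fun G => (G.map f).sum).sum := by
  induction l <;> simp [*]

lemma finsum_msum {γ ι : Type*} [Fintype ι] (G : Multiset γ) (f : γ → ι → ℤ) :
    ∑ k, (G.map fun x => f x k).sum = (G.map fun x => ∑ k, f x k).sum := by
  induction G using Multiset.induction_on with
  | empty => simp
  | cons a G ih => simp [Finset.sum_add_distrib, ih]

end SumHelpers


/-- An integer `p × q × r` array has all line sums zero in the three coordinate
directions. -/
def LineSumsZero {p q r : ℕ} (T : Fin p → Fin q → Fin r → ℤ) : Prop :=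
  (∀ i j, ∑ k, T i j k = 0) ∧ (∀ i k, ∑ j, T i j k = 0) ∧ (∀ j k, ∑ i, T i j k = 0)

/-- The number of nonzero slices `T(·,·,k)` of a `p × q × r` array. -/
def sliceCount {p q r : ℕ} (T : Fin p → Fin q → Fin r → ℤ) : ℕ :=
  (Finset.univ.filter fun k : Fin r => (fun i j => T i j k) ≠ 0).card

/-- **Corollary (no-three-way interaction).** For any positive integers `p` and `q` there is
an integer `m` such that for every `r ≥ 1` there is a set `M` of integer `p × q × r` arrays,
each with all line sums zero and at most `m` nonzero slices in the third direction, such that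
any two nonnegative integer `p × q × r` arrays with the same two-dimensional margins are
connected through nonnegative arrays by steps in `M ∪ (−M)`. -/
theorem no_three_way_interaction_markov (p q : ℕ) (hp : 0 < p) (hq : 0 < q) :
    ∃ m : ℕ, ∀ r : ℕ, 1 ≤ r → ∃ M : Set (Fin p → Fin q → Fin r → ℤ),
      (∀ T ∈ M, LineSumsZero T ∧ sliceCount T ≤ m) ∧
      ∀ u v : Fin p → Fin q → Fin r → ℕ,
        (∀ i j, ∑ k, u i j k = ∑ k, v i j k) →
        (∀ i k, ∑ j, u i j k = ∑ j, v i j k) →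
        (∀ j k, ∑ i, u i j k = ∑ i, v i j k) →
        ∃ N : ℕ, ∃ w : Fin (N + 1) → Fin p → Fin q → Fin r → ℕ,
          w 0 = u ∧ w (Fin.last N) = v ∧
          ∀ t : Fin N,
            (fun i j k => ((w t.succ i j k : ℤ) - (w t.castSucc i j k : ℤ))) ∈ M ∨
            (fun i j k => ((w t.castSucc i j k : ℤ) - (w t.succ i j k : ℤ))) ∈ M := by
  classical
  obtain ⟨m₀, hH⟩ := hilbert p q
  refine ⟨m₀, fun r hr => ?_⟩
  refine ⟨{T | LineSumsZero T ∧ sliceCount T ≤ m₀}, fun T hT => hT, ?_⟩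
  intro u v h1 h2 h3
  set D : Fin p → Fin q → Fin r → ℤ := fun i j k => (v i j k : ℤ) - (u i j k) with hD
  have hzm : ∀ k, ZeroMargin (fun i j => D i j k) := by
    intro k
    constructor
    · intro i
      show ∑ j, D i j k = 0
      simp only [hD]
      rw [Finset.sum_sub_distrib, ← Nat.cast_sum, ← Nat.cast_sum, h2 i k, sub_self]
    · intro j
      show ∑ i, D i j k = 0
      simp only [hD]
      rw [Finset.sum_sub_distrib, ← Nat.cast_sum, ← Nat.cast_sum, h3 j k, sub_self]
  have hdec : ∀ k : Fin r, ∃ L : Multiset (Code p q),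
      ((L.map decode).sum = fun i j => D i j k) ∧
      ∀ c ∈ L, ZeroMargin (decode c) ∧ ∀ i j, IntComp (decode c i j) (D i j k) :=
    fun k => decompose _ (fun i j => D i j k) le_rfl (hzm k)
  choose L hLsum hLmem using hdec
  have hslice : ∀ (k : Fin r) (i : Fin p) (j : Fin q),
      ((L k).map fun c => decode c i j).sum = D i j k := by
    intro k i j
    have h := congrFun (congrFun (hLsum k) i) j
    rw [msum_entry, Multiset.map_map] at h
    simpa [Function.comp] using h
  set P : Multiset (Fin r × Code p q) := ∑ k, ((L k).map fun c => (k, c)) with hP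
  have hPmem : ∀ x ∈ P, x.2 ∈ L x.1 := by
    intro x hx
    rw [hP] at hx
    obtain ⟨k, -, hk⟩ := Multiset.mem_sum.1 hx
    obtain ⟨c, hc, rfl⟩ := Multiset.mem_map.1 hk
    exact hc
  have hPtot : ∀ (k : Fin r) (i : Fin p) (j : Fin q),
      (P.map fun x => if x.1 = k then decode x.2 i j else 0).sum = D i j k := by
    intro k i j
    rw [hP, map_finsum_sum]
    have hterm : ∀ k' : Fin r,
        ((((L k').map fun c => (k', c)).map
          fun x : Fin r × Code p q => if x.1 = k then decode x.2 i j else 0)).sum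
        = if k' = k then D i j k else 0 := by
      intro k'
      rw [Multiset.map_map]
      by_cases h : k' = k
      · subst h
        rw [if_pos rfl]
        rw [show ((fun x : Fin r × Code p q => if x.1 = k' then decode x.2 i j else 0) ∘
            fun c => (k', c)) = fun c => decode c i j from funext fun c => by simp]
        exact hslice k' i j
      · rw [if_neg h]
        rw [show ((fun x : Fin r × Code p q => if x.1 = k then decode x.2 i j else 0) ∘
            fun c => (k', c)) = fun _ => 0 from funext fun c => by simp [h]]
        simp
    rw [Finset.sum_congr rfl fun k' _ => hterm k']
    simp
  have hPsum0 : (P.map fun x => decode x.2).sum = (0 : Mat p q) := by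
    funext i j
    show (P.map fun x => decode x.2).sum i j = 0
    rw [msum_entry, Multiset.map_map, hP, map_finsum_sum]
    have hterm : ∀ k : Fin r,
        ((((L k).map fun c => (k, c)).map
          ((fun M : Mat p q => M i j) ∘ fun x : Fin r × Code p q => decode x.2))).sum
        = D i j k := by
      intro k
      rw [Multiset.map_map]
      exact hslice k i j
    rw [Finset.sum_congr rfl fun k _ => hterm k]
    simp only [hD]
    rw [Finset.sum_sub_distrib, ← Nat.cast_sum, ← Nat.cast_sum, h1 i j, sub_self]
  obtain ⟨Gs, hGsSum, hGsMem⟩ := grouping m₀ hH P.card P le_rfl hPsum0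
  set mv : Multiset (Fin r × Code p q) → (Fin p → Fin q → Fin r → ℤ) :=
    fun G i j k => (G.map fun x => if x.1 = k then decode x.2 i j else 0).sum with hmv
  set A : ℕ → (Fin p → Fin q → Fin r → ℤ) := fun t => ((Gs.take t).map mv).sum with hA
  have htake_le : ∀ t : ℕ, ((Gs.take t).sum : Multiset (Fin r × Code p q)) ≤ P := by
    intro t
    rw [← hGsSum]
    conv_rhs => rw [← List.take_append_drop t Gs]
    rw [List.sum_append]
    exact Multiset.le_add_right _ _
  have hAeval : ∀ (t : ℕ) (i : Fin p) (j : Fin q) (k : Fin r), A t i j k =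
      (((Gs.take t).sum).map fun x => if x.1 = k then decode x.2 i j else 0).sum := by
    intro t i j k
    show ((Gs.take t).map mv).sum i j k = _
    rw [lsum_entry3, List.map_map, map_listsum_sum]
    rfl
  have hcomp : ∀ (t : ℕ) (i : Fin p) (j : Fin q) (k : Fin r),
      IntComp (A t i j k) (D i j k) := by
    intro t i j k
    rw [hAeval]
    refine intComp_sum (Multiset.map_le_map (htake_le t)) (hPtot k i j) ?_
    intro a ha
    obtain ⟨x, hxP, rfl⟩ := Multiset.mem_map.1 ha
    by_cases h : x.1 = k
    · rw [if_pos h]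
      have hx := (hLmem x.1 x.2 (hPmem x hxP)).2 i j
      rw [h] at hx
      exact hx
    · rw [if_neg h]
      exact intComp_zero _
  have hnn : ∀ (t : ℕ) (i : Fin p) (j : Fin q) (k : Fin r),
      0 ≤ (u i j k : ℤ) + A t i j k := by
    intro t i j k
    have h := hcomp t i j k
    have hDd : D i j k = (v i j k : ℤ) - u i j k := rfl
    unfold IntComp at h
    omega
  have hA0 : ∀ i j k, A 0 i j k = 0 := by
    intro i j k
    show ((Gs.take 0).map mv).sum i j k = 0
    simp
  have hAend : ∀ i j k, A Gs.length i j k = D i j k := by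
    intro i j k
    rw [hAeval, List.take_length, hGsSum, hPtot]
  have hstep : ∀ (t : ℕ) (ht : t < Gs.length) (i : Fin p) (j : Fin q) (k : Fin r),
      A (t + 1) i j k = A t i j k + mv (Gs.get ⟨t, ht⟩) i j k := by
    intro t ht i j k
    show ((Gs.take (t+1)).map mv).sum i j k = ((Gs.take t).map mv).sum i j k + _
    rw [List.take_succ, List.getElem?_eq_getElem ht, Option.toList_some, List.map_append,
      List.sum_append]
    simp [List.get_eq_getElem, Pi.add_apply]
  have hmem : ∀ G ∈ Gs, mv G ∈ ({T | LineSumsZero T ∧ sliceCount T ≤ m₀} :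
      Set (Fin p → Fin q → Fin r → ℤ)) := by
    intro G hG
    have hG0 := (hGsMem G hG).1
    have hGcard := (hGsMem G hG).2
    have hGP : G ≤ P := by
      rw [← hGsSum]
      exact mem_list_sum_le hG
    refine ⟨⟨?_, ?_, ?_⟩, ?_⟩
    · intro i j
      show ∑ k, (G.map fun x => if x.1 = k then decode x.2 i j else 0).sum = 0
      rw [finsum_msum]
      have he : ∀ x : Fin r × Code p q,
          (∑ k, if x.1 = k then decode x.2 i j else 0) = decode x.2 i j := by
        intro x
        simp
      rw [Multiset.map_congr rfl fun x _ => he x]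
      have h := congrFun (congrFun hG0 i) j
      rw [msum_entry, Multiset.map_map] at h
      simpa [Function.comp] using h
    · intro i k
      show ∑ j, (G.map fun x => if x.1 = k then decode x.2 i j else 0).sum = 0
      rw [finsum_msum]
      apply Multiset.sum_eq_zero
      intro b hb
      obtain ⟨x, hx, rfl⟩ := Multiset.mem_map.1 hb
      by_cases h : x.1 = k
      · simp only [if_pos h]
        exact (hLmem x.1 x.2 (hPmem x (Multiset.mem_of_le hGP hx))).1.1 i
      · simp only [if_neg h]
        simp
    · intro j k
      show ∑ i, (G.map fun x => if x.1 = k then decode x.2 i j else 0).sum = 0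
      rw [finsum_msum]
      apply Multiset.sum_eq_zero
      intro b hb
      obtain ⟨x, hx, rfl⟩ := Multiset.mem_map.1 hb
      by_cases h : x.1 = k
      · simp only [if_pos h]
        exact (hLmem x.1 x.2 (hPmem x (Multiset.mem_of_le hGP hx))).1.2 j
      · simp only [if_neg h]
        simp
    · show (Finset.univ.filter fun k : Fin r => (fun i j => mv G i j k) ≠ 0).card ≤ m₀
      have hsub : (Finset.univ.filter fun k : Fin r => (fun i j => mv G i j k) ≠ 0)
          ⊆ (G.map Prod.fst).toFinset := by
        intro k hk
        rw [Finset.mem_filter] at hk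
        rw [Multiset.mem_toFinset]
        by_contra hknot
        apply hk.2
        funext i j
        show (G.map fun x => if x.1 = k then decode x.2 i j else 0).sum = 0
        apply Multiset.sum_eq_zero
        intro b hb
        obtain ⟨x, hx, rfl⟩ := Multiset.mem_map.1 hb
        rw [if_neg]
        intro hc
        exact hknot (hc ▸ Multiset.mem_map_of_mem Prod.fst hx)
      calc (Finset.univ.filter fun k : Fin r => (fun i j => mv G i j k) ≠ 0).card
          ≤ (G.map Prod.fst).toFinset.card := Finset.card_le_card hsub
        _ ≤ Multiset.card (G.map Prod.fst) := Multiset.toFinset_card_le _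
        _ = G.card := Multiset.card_map _ _
        _ ≤ m₀ := hGcard
  refine ⟨Gs.length, fun t i j k => ((u i j k : ℤ) + A t.val i j k).toNat, ?_, ?_, ?_⟩
  · funext i j k
    show ((u i j k : ℤ) + A (0 : Fin (Gs.length + 1)).val i j k).toNat = u i j k
    rw [Fin.val_zero, hA0]
    omega
  · funext i j k
    show ((u i j k : ℤ) + A (Fin.last Gs.length).val i j k).toNat = v i j k
    rw [Fin.val_last, hAend]
    have hDd : D i j k = (v i j k : ℤ) - u i j k := rfl
    omega
  · intro t
    left
    have hteq : (fun i j k => (((fun (s : Fin (Gs.length + 1)) i j k =>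
        ((u i j k : ℤ) + A s.val i j k).toNat) t.succ i j k : ℤ) -
        ((fun (s : Fin (Gs.length + 1)) i j k =>
        ((u i j k : ℤ) + A s.val i j k).toNat) t.castSucc i j k : ℤ)))
        = mv (Gs.get ⟨t.val, t.isLt⟩) := by
      funext i j k
      simp only [Fin.val_succ, Fin.coe_castSucc]
      rw [Int.toNat_of_nonneg (hnn (t.val + 1) i j k), Int.toNat_of_nonneg (hnn t.val i j k)]
      rw [hstep t.val t.isLt i j k]
      ring
    rw [hteq]
    exact hmem _ (Gs.get_mem _)
end

section
/- Let u be an element of the Graver basis of A^(r) and suppose its i-th row a = u^(i) has a conformal decomposition a = a_1 + … + a_k with all a_j ∈ L(A) (i.e. Σ_j |(a_j)_t| = |a_t| for every coordinate t). Then the (r+k−1)×n table u′ obtained from u by deleting the row a and inserting the rows a_1, …, a_k lies in the Graver basis of A^(r+k−1). -/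
open Finset

/-- The lattice `L(A)` of integer linear relations on the configuration `A`. -/
def RelLat {n d : ℕ} (A : Fin n → Fin d → ℤ) : Set (Fin n → ℤ) :=
  {u | ∑ i, u i • A i = 0}

/-- The conformal partial order `⊑`: `Conf a b` iff in every coordinate
`0 ≤ a i ≤ b i` or `0 ≥ a i ≥ b i`. -/
def Conf {ι : Type*} (a b : ι → ℤ) : Prop :=
  ∀ i, (0 ≤ a i ∧ a i ≤ b i) ∨ (b i ≤ a i ∧ a i ≤ 0)

/-- The Graver basis of a configuration `A`: the `⊑`-minimal nonzero elements of its
relation lattice. -/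
def GraverV {n d : ℕ} (A : Fin n → Fin d → ℤ) : Set (Fin n → ℤ) :=
  {u | u ∈ RelLat A ∧ u ≠ 0 ∧ ∀ v ∈ RelLat A, v ≠ 0 → Conf v u → v = u}

/-- The relation lattice of the `r`-th Lawrence lifting `A^(r)`, viewed as integer `r × n`
tables: each row lies in `L(A)` and the rows sum to zero. -/
def LawRel {n d : ℕ} (A : Fin n → Fin d → ℤ) (r : ℕ) : Set (Fin r → Fin n → ℤ) :=
  {u | (∀ j, u j ∈ RelLat A) ∧ ∑ j, u j = 0}

/-- The Graver basis of the `r`-th Lawrence lifting `A^(r)`: the `⊑`-minimal nonzero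
elements of its relation lattice (entrywise conformal order on tables). -/
def GraverLift {n d : ℕ} (A : Fin n → Fin d → ℤ) (r : ℕ) : Set (Fin r → Fin n → ℤ) :=
  {u | u ∈ LawRel A r ∧ u ≠ 0 ∧
    ∀ v ∈ LawRel A r, v ≠ 0 → (∀ j, Conf (v j) (u j)) → v = u}

/-- The type of an `r × n` table: its number of nonzero rows. -/
def typeOf {r n : ℕ} (u : Fin r → Fin n → ℤ) : ℕ :=
  (Finset.univ.filter fun j => u j ≠ 0).card

lemma sum_split' {M : Type*} [AddCommMonoid M] {r : ℕ} (i : Fin r) (f : Fin r → M) :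
    ∑ j, f j = f i + ∑ j : {j : Fin r // j ≠ i}, f j.1 := by
  rw [← Finset.add_sum_erase Finset.univ f (Finset.mem_univ i)]
  congr 1
  exact Finset.sum_subtype _ (by simp) f

lemma relLat_sum' {n d k : ℕ} (A : Fin n → Fin d → ℤ) (c : Fin k → Fin n → ℤ)
    (h : ∀ j, c j ∈ RelLat A) : (∑ j, c j) ∈ RelLat A := by
  simp only [RelLat, Set.mem_setOf_eq] at *
  calc ∑ t, (∑ j, c j) t • A t = ∑ t, ∑ j, c j t • A t := by
        refine Finset.sum_congr rfl fun t _ => ?_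
        rw [Finset.sum_apply, Finset.sum_smul]
    _ = ∑ j, ∑ t, c j t • A t := Finset.sum_comm
    _ = 0 := Finset.sum_eq_zero fun j _ => h j

lemma conf_of_sum' {k : ℕ} (c : Fin k → ℤ) (h : |∑ j, c j| = ∑ j, |c j|) :
    (∀ j, 0 ≤ c j) ∨ (∀ j, c j ≤ 0) := by
  rcases le_or_gt 0 (∑ j, c j) with hs | hs
  · left
    intro j
    have h0 : ∑ j, (|c j| - c j) = 0 := by
      rw [Finset.sum_sub_distrib, ← h, abs_of_nonneg hs, sub_self]
    have h1 := (Finset.sum_eq_zero_iff_of_nonneg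
      (fun j _ => sub_nonneg.mpr (le_abs_self (c j)))).mp h0 j (Finset.mem_univ j)
    have h2 := abs_nonneg (c j)
    linarith
  · right
    intro j
    have h0 : ∑ j, (|c j| + c j) = 0 := by
      rw [Finset.sum_add_distrib, ← h, abs_of_neg hs]
      ring
    have h1 := (Finset.sum_eq_zero_iff_of_nonneg
      (fun j _ => by linarith [neg_abs_le (c j)])).mp h0 j (Finset.mem_univ j)
    have h2 := abs_nonneg (c j)
    linarith

lemma eq_of_sum_eq' {k : ℕ} (x y : Fin k → ℤ) (h : ∀ j, x j ≤ y j)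
    (hs : ∑ j, x j = ∑ j, y j) : ∀ j, x j = y j := by
  intro j
  have h0 : ∑ j, (y j - x j) = 0 := by rw [Finset.sum_sub_distrib, hs, sub_self]
  have := (Finset.sum_eq_zero_iff_of_nonneg
    (fun j _ => sub_nonneg.mpr (h j))).mp h0 j (Finset.mem_univ j)
  omega

/-- **Lemma (conformal row splitting).** If `u` is in the Graver basis of `A^(r)` and its
`i`-th row `u i` has a conformal decomposition `u i = a 0 + ⋯ + a (k-1)` with all `a j ∈ L(A)`
(the absolute values adding up in every coordinate), then the `(r+k−1) × n` table obtained
from `u` by deleting the row `u i` and inserting the rows `a 0, …, a (k-1)` lies in the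
Graver basis of `A^(r+k−1)`. -/
theorem graver_of_conformal_row_splitting {n d r k : ℕ} (A : Fin n → Fin d → ℤ)
    (hspan : Submodule.span ℤ (Set.range A) = ⊤)
    (u : Fin r → Fin n → ℤ) (hu : u ∈ GraverLift A r) (i : Fin r)
    (a : Fin k → Fin n → ℤ) (ha : ∀ j, a j ∈ RelLat A)
    (hsum : u i = ∑ j, a j)
    (hconf : ∀ t, |u i t| = ∑ j, |a j t|) :
    ∀ e : Fin (r + k - 1) ≃ ({j : Fin r // j ≠ i} ⊕ Fin k),
      (fun s => Sum.elim (fun j : {j : Fin r // j ≠ i} => u j.1) a (e s)) ∈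
        GraverLift A (r + k - 1) := by
  obtain ⟨⟨hrows, hsum0⟩, hne, hmin⟩ := hu
  intro e
  set U : ({j : Fin r // j ≠ i} ⊕ Fin k) → Fin n → ℤ :=
    Sum.elim (fun j : {j : Fin r // j ≠ i} => u j.1) a with hU
  have hat : ∀ t, u i t = ∑ j, a j t := by
    intro t
    rw [hsum]
    simp [Finset.sum_apply]
  have hsigns : ∀ t, (∀ j, 0 ≤ a j t) ∨ (∀ j, a j t ≤ 0) := by
    intro t
    have h := hconf t
    rw [hat t] at h
    exact conf_of_sum' _ h
  have hUrel : ∀ x, U x ∈ RelLat A := by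
    rintro (⟨j, hj⟩ | j)
    · exact hrows j
    · exact ha j
  have hUsum : ∑ x, U x = 0 := by
    rw [Fintype.sum_sum_type]
    have h1 : ∑ x : {j : Fin r // j ≠ i}, U (Sum.inl x)
        = ∑ j : {j : Fin r // j ≠ i}, u j.1 := Finset.sum_congr rfl fun x _ => rfl
    have h2 : ∑ j', U (Sum.inr j') = u i := by
      simp only [hU, Sum.elim_inr]
      exact hsum.symm
    rw [h1, h2, add_comm, ← sum_split' i u, hsum0]
  refine ⟨⟨fun s => hUrel (e s), ?_⟩, ?_, ?_⟩
  · rw [Equiv.sum_comp e U, hUsum]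
  · intro h0
    apply hne
    have hUz : ∀ x, U x = 0 := by
      intro x
      have := congrFun h0 (e.symm x)
      simpa using this
    funext j
    by_cases hj : j = i
    · subst hj
      rw [hsum]
      exact Finset.sum_eq_zero fun j _ => hUz (Sum.inr j)
    · exact hUz (Sum.inl ⟨j, hj⟩)
  · intro v hv hvne hvconf
    obtain ⟨hvrows, hvsum⟩ := hv
    set V : ({j : Fin r // j ≠ i} ⊕ Fin k) → Fin n → ℤ := fun x => v (e.symm x) with hV
    have hVconf : ∀ x, Conf (V x) (U x) := by
      intro x
      have h := hvconf (e.symm x)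
      simp only [Equiv.apply_symm_apply] at h
      exact h
    have hVsum : ∑ x, V x = 0 := (Equiv.sum_comp e.symm v).trans hvsum
    set w : Fin r → Fin n → ℤ :=
      fun j => if h : j = i then ∑ j', V (Sum.inr j') else V (Sum.inl ⟨j, h⟩) with hw
    have hwi : w i = ∑ j', V (Sum.inr j') := by simp [hw]
    have hwj : ∀ (j : Fin r) (hj : j ≠ i), w j = V (Sum.inl ⟨j, hj⟩) := by
      intro j hj
      simp [hw, hj]
    have hwrows : ∀ j, w j ∈ RelLat A := by
      intro j
      by_cases hj : j = i
      · subst hj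
        rw [hwi]
        exact relLat_sum' A _ (fun j' => hvrows (e.symm (Sum.inr j')))
      · rw [hwj j hj]
        exact hvrows _
    have hwsum : ∑ j, w j = 0 := by
      rw [sum_split' i w, hwi]
      have : ∑ j : {j : Fin r // j ≠ i}, w j.1
          = ∑ x : {j : Fin r // j ≠ i}, V (Sum.inl x) :=
        Finset.sum_congr rfl fun x _ => hwj x.1 x.2
      rw [this, add_comm, ← Fintype.sum_sum_type, hVsum]
    have hwconf : ∀ j, Conf (w j) (u j) := by
      intro j
      by_cases hj : j = i
      · subst hj
        intro t
        rw [hwi]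
        have hsumt : (∑ j', V (Sum.inr j')) t = ∑ j', V (Sum.inr j') t := by
          simp [Finset.sum_apply]
        rw [hsumt]
        have hvt : ∀ j', (0 ≤ V (Sum.inr j') t ∧ V (Sum.inr j') t ≤ a j' t)
            ∨ (a j' t ≤ V (Sum.inr j') t ∧ V (Sum.inr j') t ≤ 0) :=
          fun j' => hVconf (Sum.inr j') t
        rcases hsigns t with hpos | hneg
        · left
          refine ⟨Finset.sum_nonneg fun j' _ => ?_, ?_⟩
          · have := hvt j'; have := hpos j'; omega
          · rw [hat t]
            exact Finset.sum_le_sum fun j' _ => by have := hvt j'; have := hpos j'; omega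
        · right
          refine ⟨?_, Finset.sum_nonpos fun j' _ => ?_⟩
          · rw [hat t]
            exact Finset.sum_le_sum fun j' _ => by have := hvt j'; have := hneg j'; omega
          · have := hvt j'; have := hneg j'; omega
      · rw [hwj j hj]
        exact hVconf (Sum.inl ⟨j, hj⟩)
    by_cases hwz : w = 0
    · exfalso
      apply hvne
      have hVinl : ∀ x : {j : Fin r // j ≠ i}, V (Sum.inl x) = 0 := by
        rintro ⟨j, hj⟩
        rw [← hwj j hj, hwz]
        rfl
      have h0 : ∑ j', V (Sum.inr j') = 0 := by
        rw [← hwi, hwz]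
        rfl
      have hVinr : ∀ j', V (Sum.inr j') = 0 := by
        intro j'
        funext t
        have h0t : ∑ j'', V (Sum.inr j'') t = 0 := by
          have := congrFun h0 t
          simpa [Finset.sum_apply] using this
        have hvt : ∀ j'', (0 ≤ V (Sum.inr j'') t ∧ V (Sum.inr j'') t ≤ a j'' t)
            ∨ (a j'' t ≤ V (Sum.inr j'') t ∧ V (Sum.inr j'') t ≤ 0) :=
          fun j'' => hVconf (Sum.inr j'') t
        rcases hsigns t with hpos | hneg
        · exact (Finset.sum_eq_zero_iff_of_nonneg
            (fun j'' _ => by have := hvt j''; have := hpos j''; omega)).mp h0t j'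
            (Finset.mem_univ j')
        · exact (Finset.sum_eq_zero_iff_of_nonpos
            (fun j'' _ => by have := hvt j''; have := hneg j''; omega)).mp h0t j'
            (Finset.mem_univ j')
      funext s
      show v s = 0
      have hvs : v s = V (e s) := by simp [hV]
      rcases hes : e s with x | j'
      · rw [hvs, hes]; exact hVinl x
      · rw [hvs, hes]; exact hVinr j'
    · have hweq : w = u := hmin w ⟨hwrows, hwsum⟩ hwz hwconf
      have hinr : ∀ j', V (Sum.inr j') = a j' := by
        have hs' : ∑ j', V (Sum.inr j') = ∑ j', a j' := by
          rw [← hwi, hweq, hsum]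
        intro j'
        funext t
        have hst : ∑ j'', V (Sum.inr j'') t = ∑ j'', a j'' t := by
          have := congrFun hs' t
          simpa [Finset.sum_apply] using this
        have hvt : ∀ j'', (0 ≤ V (Sum.inr j'') t ∧ V (Sum.inr j'') t ≤ a j'' t)
            ∨ (a j'' t ≤ V (Sum.inr j'') t ∧ V (Sum.inr j'') t ≤ 0) :=
          fun j'' => hVconf (Sum.inr j'') t
        rcases hsigns t with hpos | hneg
        · exact eq_of_sum_eq' (fun j'' => V (Sum.inr j'') t) (fun j'' => a j'' t)
            (fun j'' => by
              show V (Sum.inr j'') t ≤ a j'' t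
              have := hvt j''; have := hpos j''; omega) hst j'
        · exact (eq_of_sum_eq' (fun j'' => a j'' t) (fun j'' => V (Sum.inr j'') t)
            (fun j'' => by
              show a j'' t ≤ V (Sum.inr j'') t
              have := hvt j''; have := hneg j''; omega) hst.symm j').symm
      funext s
      have hvs : v s = V (e s) := by simp [hV]
      show v s = U (e s)
      rcases hes : e s with x | j'
      · rw [hvs, hes]
        show V (Sum.inl x) = u x.1
        rw [← hwj x.1 x.2, hweq]
      · rw [hvs, hes]
        exact hinr j'
end

section
/- Let the Graver basis of A be {±b_1, …, ±b_k} with the b_i pairwise distinct and pairwise non-opposite, and let u be an r×n integer table (r ≥ 3) each of whose rows equals some b_i or −b_i, whose rows sum to zero, and such that no two rows of u are opposite vectors. Define ψ_u ∈ ℤ^k by (ψ_u)_i = (number of rows of u equal to b_i) − (number of rows of u equal to −b_i). Then u is in the Graver basis of A^(r) if and only if ψ_u is in the Graver basis of the configuration B = (b_1, …, b_k) ⊂ ℤ^n. -/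
open Finset

section AuxLemmas

private lemma conf_refl {n : ℕ} (x : Fin n → ℤ) : Conf x x := by
  intro i
  rcases le_total 0 (x i) with h | h
  · exact Or.inl ⟨h, le_rfl⟩
  · exact Or.inr ⟨le_rfl, h⟩

private lemma conf_zero {n : ℕ} (x : Fin n → ℤ) : Conf 0 x := by
  intro i
  rcases le_total 0 (x i) with h | h
  · exact Or.inl ⟨le_rfl, by simpa using h⟩
  · exact Or.inr ⟨by simpa using h, le_rfl⟩

private lemma key_sum {r n k : ℕ} (b : Fin k → Fin n → ℤ)
    (hb0 : ∀ i, b i ≠ 0)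
    (huniq : ∀ (x : Fin n → ℤ) i i', (x = b i ∨ x = -b i) → (x = b i' ∨ x = -b i') → i = i')
    (v : Fin r → Fin n → ℤ)
    (hv : ∀ j, v j = 0 ∨ ∃ i, v j = b i ∨ v j = -b i) :
    ∑ i, (((univ.filter fun j => v j = b i).card : ℤ) -
      ((univ.filter fun j => v j = -b i).card : ℤ)) • b i = ∑ j, v j := by
  have hbne : ∀ i, b i ≠ -b i := by
    intro i h
    apply hb0 i
    funext t
    have := congrFun h t
    simp only [Pi.neg_apply] at this
    simp only [Pi.zero_apply]
    omega
  have step1 : ∀ i : Fin k, (((univ.filter fun j => v j = b i).card : ℤ) -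
      ((univ.filter fun j => v j = -b i).card : ℤ)) • b i
      = ∑ j, ((if v j = b i then (1:ℤ) else 0) • b i
          + (if v j = -b i then (1:ℤ) else 0) • (-b i)) := by
    intro i
    rw [Finset.sum_add_distrib, ← Finset.sum_smul, ← Finset.sum_smul,
      Finset.sum_boole, Finset.sum_boole, sub_smul, smul_neg, sub_eq_add_neg]
  rw [Finset.sum_congr rfl (fun i _ => step1 i), Finset.sum_comm]
  refine Finset.sum_congr rfl fun j _ => ?_
  rcases hv j with h0 | ⟨i₀, hc | hc⟩
  · rw [Finset.sum_eq_zero, h0]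
    intro i _
    rw [if_neg, if_neg, zero_smul, zero_smul, add_zero]
    · rw [h0]; exact fun h => hb0 i (by rw [← neg_eq_zero, ← h])
    · rw [h0]; exact fun h => hb0 i h.symm
  · rw [Finset.sum_eq_single i₀]
    · rw [if_pos hc, if_neg, one_smul, zero_smul, add_zero, hc]
      intro h
      exact hbne i₀ (hc.symm.trans h)
    · intro i _ hi
      rw [if_neg, if_neg, zero_smul, zero_smul, add_zero]
      · exact fun h => hi (huniq (v j) i i₀ (Or.inr h) (Or.inl hc))
      · exact fun h => hi (huniq (v j) i i₀ (Or.inl h) (Or.inl hc))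
    · intro h; exact absurd (Finset.mem_univ i₀) h
  · rw [Finset.sum_eq_single i₀]
    · rw [if_pos hc, if_neg, one_smul, zero_smul, zero_add, hc]
      intro h
      exact hbne i₀ (h.symm.trans hc)
    · intro i _ hi
      rw [if_neg, if_neg, zero_smul, zero_smul, add_zero]
      · exact fun h => hi (huniq (v j) i i₀ (Or.inr h) (Or.inr hc))
      · exact fun h => hi (huniq (v j) i i₀ (Or.inl h) (Or.inr hc))
    · intro h; exact absurd (Finset.mem_univ i₀) h

private lemma eq_of_counts {r n k : ℕ} (b : Fin k → Fin n → ℤ) (u w : Fin r → Fin n → ℤ)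
    (hb0 : ∀ i, b i ≠ 0)
    (hPM : ∀ i, (univ.filter fun j => u j = b i) = ∅ ∨ (univ.filter fun j => u j = -b i) = ∅)
    (hrows : ∀ j, ∃ i, u j = b i ∨ u j = -b i)
    (hw : ∀ j, w j = 0 ∨ w j = u j)
    (hcount : ∀ i, ((univ.filter fun j => w j = b i).card : ℤ) -
        ((univ.filter fun j => w j = -b i).card : ℤ)
      = ((univ.filter fun j => u j = b i).card : ℤ) -
        ((univ.filter fun j => u j = -b i).card : ℤ)) :
    w = u := by
  have hsubP : ∀ i, (univ.filter fun j => w j = b i) ⊆ (univ.filter fun j => u j = b i) := by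
    intro i j hj
    simp only [mem_filter, mem_univ, true_and] at hj ⊢
    rcases hw j with h | h
    · rw [h] at hj; exact absurd hj.symm (hb0 i)
    · rw [← h]; exact hj
  have hsubM : ∀ i, (univ.filter fun j => w j = -b i) ⊆ (univ.filter fun j => u j = -b i) := by
    intro i j hj
    simp only [mem_filter, mem_univ, true_and] at hj ⊢
    rcases hw j with h | h
    · rw [h] at hj
      exact absurd (neg_eq_zero.mp hj.symm) (hb0 i)
    · rw [← h]; exact hj
  have hkey : ∀ i, (univ.filter fun j => w j = b i) = (univ.filter fun j => u j = b i) ∧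
      (univ.filter fun j => w j = -b i) = (univ.filter fun j => u j = -b i) := by
    intro i
    have hc := hcount i
    have hle1 := Finset.card_le_card (hsubP i)
    have hle2 := Finset.card_le_card (hsubM i)
    rcases hPM i with hE | hE
    · have hwE : (univ.filter fun j => w j = b i) = ∅ :=
        Finset.subset_empty.mp (hE ▸ hsubP i)
      rw [hE, hwE] at hc ⊢
      refine ⟨rfl, Finset.eq_of_subset_of_card_le (hsubM i) ?_⟩
      simp only [Finset.card_empty, Nat.cast_zero, zero_sub, neg_inj, Nat.cast_inj] at hc
      omega
    · have hwE : (univ.filter fun j => w j = -b i) = ∅ :=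
        Finset.subset_empty.mp (hE ▸ hsubM i)
      rw [hE, hwE] at hc ⊢
      refine ⟨Finset.eq_of_subset_of_card_le (hsubP i) ?_, rfl⟩
      simp only [Finset.card_empty, Nat.cast_zero, sub_zero, Nat.cast_inj] at hc
      omega
  funext j
  obtain ⟨i, hc | hc⟩ := hrows j
  · have h1 : j ∈ univ.filter fun j' => u j' = b i := by simp [hc]
    rw [← (hkey i).1] at h1
    simp only [mem_filter, mem_univ, true_and] at h1
    rw [h1, hc]
  · have h1 : j ∈ univ.filter fun j' => u j' = -b i := by simp [hc]
    rw [← (hkey i).2] at h1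
    simp only [mem_filter, mem_univ, true_and] at h1
    rw [h1, hc]

private lemma counts_ne_zero {r n k : ℕ} (b : Fin k → Fin n → ℤ) (u w : Fin r → Fin n → ℤ)
    (hb0 : ∀ i, b i ≠ 0)
    (hPM : ∀ i, (univ.filter fun j => u j = b i) = ∅ ∨ (univ.filter fun j => u j = -b i) = ∅)
    (hw : ∀ j, w j = 0 ∨ w j = u j)
    (j : Fin r) (hj : w j ≠ 0) (hrow : ∃ i, u j = b i ∨ u j = -b i) :
    (fun i => ((univ.filter fun j' => w j' = b i).card : ℤ) -
      ((univ.filter fun j' => w j' = -b i).card : ℤ)) ≠ 0 := by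
  have hwj : w j = u j := (hw j).resolve_left hj
  obtain ⟨i₀, hc | hc⟩ := hrow
  · intro h
    have hi := congrFun h i₀
    simp only [Pi.zero_apply] at hi
    have hjP : j ∈ univ.filter fun j' => w j' = b i₀ := by
      simp [hwj, hc]
    have hjuP : j ∈ univ.filter fun j' => u j' = b i₀ := by simp [hc]
    have hMu : (univ.filter fun j' => u j' = -b i₀) = ∅ := by
      rcases hPM i₀ with hE | hE
      · rw [hE] at hjuP; simp at hjuP
      · exact hE
    have hMw : (univ.filter fun j' => w j' = -b i₀) = ∅ := by
      rw [Finset.eq_empty_iff_forall_notMem]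
      intro j' hj'
      simp only [mem_filter, mem_univ, true_and] at hj'
      have hj'0 : w j' ≠ 0 := by rw [hj']; simpa using hb0 i₀
      have h2 : u j' = -b i₀ := by rw [← (hw j').resolve_left hj'0]; exact hj'
      have h3 : j' ∈ univ.filter fun j'' => u j'' = -b i₀ := by simp [h2]
      rw [hMu] at h3
      simp at h3
    rw [hMw] at hi
    simp only [Finset.card_empty, Nat.cast_zero, sub_zero, Nat.cast_eq_zero,
      Finset.card_eq_zero] at hi
    rw [hi] at hjP
    simp at hjP
  · intro h
    have hi := congrFun h i₀
    simp only [Pi.zero_apply] at hi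
    have hjM : j ∈ univ.filter fun j' => w j' = -b i₀ := by
      simp [hwj, hc]
    have hjuM : j ∈ univ.filter fun j' => u j' = -b i₀ := by simp [hc]
    have hPu : (univ.filter fun j' => u j' = b i₀) = ∅ := by
      rcases hPM i₀ with hE | hE
      · exact hE
      · rw [hE] at hjuM; simp at hjuM
    have hPw : (univ.filter fun j' => w j' = b i₀) = ∅ := by
      rw [Finset.eq_empty_iff_forall_notMem]
      intro j' hj'
      simp only [mem_filter, mem_univ, true_and] at hj'
      have hj'0 : w j' ≠ 0 := by rw [hj']; exact hb0 i₀
      have h2 : u j' = b i₀ := by rw [← (hw j').resolve_left hj'0]; exact hj'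
      have h3 : j' ∈ univ.filter fun j'' => u j'' = b i₀ := by simp [h2]
      rw [hPu] at h3
      simp at h3
    rw [hPw] at hi
    simp only [Finset.card_empty, Nat.cast_zero, zero_sub, neg_eq_zero, Nat.cast_eq_zero,
      Finset.card_eq_zero] at hi
    rw [hi] at hjM
    simp at hjM

end AuxLemmas

/-- **Claim in the proof of the main theorem.** Let the Graver basis of `A` be
`{±b_1, …, ±b_k}` with the `b_i` pairwise distinct and pairwise non-opposite, and let `u` be
an `r × n` integer table (`r ≥ 3`) each of whose rows equals some `b i` or `−b i`, whose
rows sum to zero, and no two of whose rows are opposite. Let `ψ_u ∈ ℤ^k` count with sign how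
many times `±b i` appears as a row of `u`. Then `u` is in the Graver basis of `A^(r)` if and
only if `ψ_u` is in the Graver basis of the configuration `B = (b_1, …, b_k) ⊂ ℤ^n`. -/
theorem graver_table_iff_multiplicity_vector_graver {n d r k : ℕ}
    (A : Fin n → Fin d → ℤ) (hspan : Submodule.span ℤ (Set.range A) = ⊤)
    (hr : 3 ≤ r) (b : Fin k → Fin n → ℤ)
    (hGraver : GraverV A = {x | ∃ i, x = b i ∨ x = -b i})
    (hdist : ∀ i i', i ≠ i' → b i ≠ b i' ∧ b i ≠ -b i')
    (u : Fin r → Fin n → ℤ)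
    (hrows : ∀ j, ∃ i, u j = b i ∨ u j = -b i)
    (hsum : ∑ j, u j = 0)
    (hopp : ∀ j j', j ≠ j' → u j ≠ -u j') :
    u ∈ GraverLift A r ↔
      (fun i => ((Finset.univ.filter fun j => u j = b i).card : ℤ) -
          ((Finset.univ.filter fun j => u j = -b i).card : ℤ)) ∈ GraverV b := by
  classical
  have hbG : ∀ i, b i ∈ GraverV A := by
    intro i; rw [hGraver]; exact ⟨i, Or.inl rfl⟩
  have hb0 : ∀ i, b i ≠ 0 := fun i => (hbG i).2.1
  have hbneg : ∀ i, b i ≠ -b i := by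
    intro i h
    apply hb0 i
    funext t
    have := congrFun h t
    simp only [Pi.neg_apply] at this
    simp only [Pi.zero_apply]
    omega
  have huG : ∀ j, u j ∈ GraverV A := by
    intro j; rw [hGraver]; exact hrows j
  have hu0 : ∀ j, u j ≠ 0 := fun j => (huG j).2.1
  have huniq : ∀ (x : Fin n → ℤ) i i', (x = b i ∨ x = -b i) → (x = b i' ∨ x = -b i') →
      i = i' := by
    intro x i i' h1 h2
    by_contra hne
    rcases h1 with h1 | h1 <;> rcases h2 with h2 | h2
    · exact (hdist i i' hne).1 (h1.symm.trans h2)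
    · exact (hdist i i' hne).2 (h1.symm.trans h2)
    · exact (hdist i' i (Ne.symm hne)).2 (h2.symm.trans h1)
    · exact (hdist i i' hne).1 (neg_injective (h1.symm.trans h2))
  have hPM : ∀ i, (univ.filter fun j => u j = b i) = ∅ ∨
      (univ.filter fun j => u j = -b i) = ∅ := by
    intro i
    by_contra h
    push_neg at h
    obtain ⟨j, hj⟩ := h.1
    obtain ⟨j', hj'⟩ := h.2
    simp only [mem_filter, mem_univ, true_and] at hj hj'
    have hne : j ≠ j' := by
      rintro rfl
      rw [hj] at hj'
      exact hbneg i hj'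
    exact hopp j j' hne (by rw [hj, hj', neg_neg])
  have h0R : (0 : Fin n → ℤ) ∈ RelLat A := by
    show ∑ i, (0 : Fin n → ℤ) i • A i = 0
    simp
  have hkeyu := key_sum b hb0 huniq u (fun j => Or.inr (hrows j))
  have j0 : Fin r := ⟨0, by omega⟩
  constructor
  · -- forward direction
    intro hu
    refine ⟨?_, ?_, ?_⟩
    · show ∑ i, (((univ.filter fun j => u j = b i).card : ℤ) -
          ((univ.filter fun j => u j = -b i).card : ℤ)) • b i = 0
      rw [hkeyu]; exact hsum
    · exact counts_ne_zero b u u hb0 hPM (fun j => Or.inr rfl) j0 (hu0 j0) (hrows j0)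
    · intro φ hφR hφ0 hconfφ
      have hφsum : ∑ i, φ i • b i = 0 := hφR
      -- choose subsets realizing φ
      have hchoice : ∀ i, ∃ S : Finset (Fin r),
          (0 ≤ φ i → S ⊆ (univ.filter fun j => u j = b i) ∧ (S.card : ℤ) = φ i) ∧
          (φ i < 0 → S ⊆ (univ.filter fun j => u j = -b i) ∧ (S.card : ℤ) = -φ i) := by
        intro i
        have hc := hconfφ i
        simp only [] at hc
        rcases le_or_gt 0 (φ i) with h | h
        · have hle : (φ i).toNat ≤ (univ.filter fun j => u j = b i).card := by
            rcases hc with ⟨h1, h2⟩ | ⟨h1, h2⟩ <;> omega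
          obtain ⟨S, hSsub, hScard⟩ := Finset.exists_subset_card_eq hle
          exact ⟨S, fun _ => ⟨hSsub, by omega⟩, fun h' => absurd h (not_le.mpr h')⟩
        · have hle : (-φ i).toNat ≤ (univ.filter fun j => u j = -b i).card := by
            rcases hc with ⟨h1, h2⟩ | ⟨h1, h2⟩ <;> omega
          obtain ⟨S, hSsub, hScard⟩ := Finset.exists_subset_card_eq hle
          exact ⟨S, fun h' => absurd h (not_lt.mpr h'), fun _ => ⟨hSsub, by omega⟩⟩
      choose S hS using hchoice
      have hroute : ∀ j i, j ∈ S i → u j = b i ∨ u j = -b i := by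
        intro j i hj
        rcases le_or_gt 0 (φ i) with h | h
        · have := ((hS i).1 h).1 hj
          simp only [mem_filter, mem_univ, true_and] at this
          exact Or.inl this
        · have := ((hS i).2 h).1 hj
          simp only [mem_filter, mem_univ, true_and] at this
          exact Or.inr this
      set v : Fin r → Fin n → ℤ := fun j => if ∃ i, j ∈ S i then u j else 0 with hvdef
      have hvrows : ∀ j, v j = 0 ∨ v j = u j := by
        intro j
        by_cases h : ∃ i, j ∈ S i
        · right; simp [hvdef, h]
        · left; simp [hvdef, h]
      have hveqmem : ∀ j i, j ∈ S i → v j = u j := by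
        intro j i hj
        simp only [hvdef]
        rw [if_pos ⟨i, hj⟩]
      -- count computation
      have hψv : ∀ i, ((univ.filter fun j => v j = b i).card : ℤ) -
          ((univ.filter fun j => v j = -b i).card : ℤ) = φ i := by
        intro i
        rcases le_or_gt 0 (φ i) with h | h
        · obtain ⟨hsub, hcard⟩ := (hS i).1 h
          have hPv : (univ.filter fun j => v j = b i) = S i := by
            ext j
            simp only [mem_filter, mem_univ, true_and]
            constructor
            · intro hvj
              have hne0 : v j ≠ 0 := by rw [hvj]; exact hb0 i
              have hex : ∃ i', j ∈ S i' := by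
                by_contra hex
                exact hne0 (by simp [hvdef, hex])
              obtain ⟨i', hi'⟩ := hex
              have hu' : u j = b i := by rw [← hveqmem j i' hi']; exact hvj
              have : i' = i := huniq (u j) i' i (hroute j i' hi') (Or.inl hu')
              rwa [this] at hi'
            · intro hj
              have := hsub hj
              simp only [mem_filter, mem_univ, true_and] at this
              rw [hveqmem j i hj, this]
          have hMv : (univ.filter fun j => v j = -b i) = ∅ := by
            rw [Finset.eq_empty_iff_forall_notMem]
            intro j hj
            simp only [mem_filter, mem_univ, true_and] at hj
            have hne0 : v j ≠ 0 := by rw [hj]; simpa using hb0 i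
            have hex : ∃ i', j ∈ S i' := by
              by_contra hex
              exact hne0 (by simp [hvdef, hex])
            obtain ⟨i', hi'⟩ := hex
            have hu' : u j = -b i := by rw [← hveqmem j i' hi']; exact hj
            have hii : i' = i := huniq (u j) i' i (hroute j i' hi') (Or.inr hu')
            rw [hii] at hi'
            have := hsub hi'
            simp only [mem_filter, mem_univ, true_and] at this
            exact hbneg i (this.symm.trans hu')
          rw [hPv, hMv, hcard]
          simp
        · obtain ⟨hsub, hcard⟩ := (hS i).2 h
          have hMv : (univ.filter fun j => v j = -b i) = S i := by
            ext j
            simp only [mem_filter, mem_univ, true_and]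
            constructor
            · intro hvj
              have hne0 : v j ≠ 0 := by rw [hvj]; simpa using hb0 i
              have hex : ∃ i', j ∈ S i' := by
                by_contra hex
                exact hne0 (by simp [hvdef, hex])
              obtain ⟨i', hi'⟩ := hex
              have hu' : u j = -b i := by rw [← hveqmem j i' hi']; exact hvj
              have : i' = i := huniq (u j) i' i (hroute j i' hi') (Or.inr hu')
              rwa [this] at hi'
            · intro hj
              have := hsub hj
              simp only [mem_filter, mem_univ, true_and] at this
              rw [hveqmem j i hj, this]
          have hPv : (univ.filter fun j => v j = b i) = ∅ := by
            rw [Finset.eq_empty_iff_forall_notMem]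
            intro j hj
            simp only [mem_filter, mem_univ, true_and] at hj
            have hne0 : v j ≠ 0 := by rw [hj]; exact hb0 i
            have hex : ∃ i', j ∈ S i' := by
              by_contra hex
              exact hne0 (by simp [hvdef, hex])
            obtain ⟨i', hi'⟩ := hex
            have hu' : u j = b i := by rw [← hveqmem j i' hi']; exact hj
            have hii : i' = i := huniq (u j) i' i (hroute j i' hi') (Or.inl hu')
            rw [hii] at hi'
            have := hsub hi'
            simp only [mem_filter, mem_univ, true_and] at this
            exact hbneg i (hu'.symm.trans this)
          rw [hPv, hMv, hcard]
          simp
      have hvkey := key_sum b hb0 huniq v (by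
        intro j
        rcases hvrows j with h | h
        · exact Or.inl h
        · exact Or.inr (by rw [h]; exact hrows j))
      have hvLaw : v ∈ LawRel A r := by
        refine ⟨fun j => ?_, ?_⟩
        · rcases hvrows j with h | h
          · rw [h]; exact h0R
          · rw [h]; exact (huG j).1
        · rw [← hvkey, Finset.sum_congr rfl (fun i _ => by rw [hψv i])]
          exact hφsum
      have hvne : v ≠ 0 := by
        obtain ⟨i, hi⟩ := Function.ne_iff.mp hφ0
        have hSne : (S i).Nonempty := by
          rw [← Finset.card_pos]
          rcases le_or_gt 0 (φ i) with h | h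
          · have := ((hS i).1 h).2
            simp only [Pi.zero_apply] at hi
            omega
          · have := ((hS i).2 h).2
            omega
        obtain ⟨j, hj⟩ := hSne
        intro h
        apply hu0 j
        rw [← hveqmem j i hj, h]
        simp
      have hconfv : ∀ j, Conf (v j) (u j) := by
        intro j
        rcases hvrows j with h | h
        · rw [h]; exact conf_zero _
        · rw [h]; exact conf_refl _
      have hveq : v = u := hu.2.2 v hvLaw hvne hconfv
      funext i
      have h := hψv i
      rw [hveq] at h
      exact h.symm
  · -- reverse direction
    intro hψG
    refine ⟨⟨fun j => (huG j).1, hsum⟩, ?_, ?_⟩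
    · intro h
      exact hu0 j0 (congrFun h j0)
    · intro v hvLaw hvne hconf
      have hv01 : ∀ j, v j = 0 ∨ v j = u j := by
        intro j
        by_cases h : v j = 0
        · exact Or.inl h
        · exact Or.inr ((huG j).2.2 (v j) (hvLaw.1 j) h (hconf j))
      have hsubP : ∀ i, (univ.filter fun j => v j = b i) ⊆
          (univ.filter fun j => u j = b i) := by
        intro i j hj
        simp only [mem_filter, mem_univ, true_and] at hj ⊢
        rcases hv01 j with h | h
        · rw [h] at hj; exact absurd hj.symm (hb0 i)
        · rw [← h]; exact hj
      have hsubM : ∀ i, (univ.filter fun j => v j = -b i) ⊆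
          (univ.filter fun j => u j = -b i) := by
        intro i j hj
        simp only [mem_filter, mem_univ, true_and] at hj ⊢
        rcases hv01 j with h | h
        · rw [h] at hj; exact absurd (neg_eq_zero.mp hj.symm) (hb0 i)
        · rw [← h]; exact hj
      have hvkey := key_sum b hb0 huniq v (by
        intro j
        rcases hv01 j with h | h
        · exact Or.inl h
        · exact Or.inr (by rw [h]; exact hrows j))
      have hψvR : (fun i => ((univ.filter fun j => v j = b i).card : ℤ) -
          ((univ.filter fun j => v j = -b i).card : ℤ)) ∈ RelLat b := by
        show ∑ i, (((univ.filter fun j => v j = b i).card : ℤ) -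
          ((univ.filter fun j => v j = -b i).card : ℤ)) • b i = 0
        rw [hvkey]; exact hvLaw.2
      have hψvne : (fun i => ((univ.filter fun j => v j = b i).card : ℤ) -
          ((univ.filter fun j => v j = -b i).card : ℤ)) ≠ 0 := by
        obtain ⟨j, hj⟩ := Function.ne_iff.mp hvne
        exact counts_ne_zero b u v hb0 hPM hv01 j hj (hrows j)
      have hconfψ : Conf (fun i => ((univ.filter fun j => v j = b i).card : ℤ) -
            ((univ.filter fun j => v j = -b i).card : ℤ))
          (fun i => ((univ.filter fun j => u j = b i).card : ℤ) -
            ((univ.filter fun j => u j = -b i).card : ℤ)) := by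
        intro i
        simp only []
        have h1 := Finset.card_le_card (hsubP i)
        have h2 := Finset.card_le_card (hsubM i)
        rcases hPM i with hE | hE
        · have hvE : (univ.filter fun j => v j = b i) = ∅ :=
            Finset.subset_empty.mp (hE ▸ hsubP i)
          rw [hE, hvE]
          right
          simp only [Finset.card_empty, Nat.cast_zero, zero_sub]
          omega
        · have hvE : (univ.filter fun j => v j = -b i) = ∅ :=
            Finset.subset_empty.mp (hE ▸ hsubM i)
          rw [hE, hvE]
          left
          simp only [Finset.card_empty, Nat.cast_zero, sub_zero]
          omega
      have hψveq := hψG.2.2 _ hψvR hψvne hconfψ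
      exact eq_of_counts b u v hb0 hPM hrows hv01 (fun i => congrFun hψveq i)
end

section
/- Let P(A) be the set of finite multisets V of elements of L(A)∖{0} whose elements sum to zero, partially ordered by: V ≤ V′ iff there is an injective map f from V to V′ (as multisets) with v ⊑ f(v) for every v ∈ V. Then P(A) has only finitely many minimal elements, and the Graver complexity g(A) equals the maximum cardinality of a minimal element of P(A). -/
open Finset

/-- `P(A)`: the set of (nonempty) finite multisets of elements of `L(A) ∖ {0}` whose
elements sum to zero. -/
def PA {n d : ℕ} (A : Fin n → Fin d → ℤ) : Set (Multiset (Fin n → ℤ)) :=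
  {V | V ≠ 0 ∧ (∀ v ∈ V, v ∈ RelLat A ∧ v ≠ 0) ∧ V.sum = 0}

/-- The partial order on multisets: `V ≤ V'` iff there is an injective (multiset) map `f`
from `V` into `V'` with `v ⊑ f v` for all `v ∈ V`. -/
def Ple {n : ℕ} (V V' : Multiset (Fin n → ℤ)) : Prop :=
  ∃ W ≤ V', Multiset.Rel Conf V W

/-- The minimal elements of `P(A)` in the partial order `Ple`. -/
def MinPA {n d : ℕ} (A : Fin n → Fin d → ℤ) : Set (Multiset (Fin n → ℤ)) :=
  {V | V ∈ PA A ∧ ∀ V' ∈ PA A, Ple V' V → V' = V}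

section ConfBasic
variable {m : ℕ}

lemma conf_refl_s7 (a : Fin m → ℤ) : Conf a a := fun i => by omega

lemma conf_trans {a b c : Fin m → ℤ} (h1 : Conf a b) (h2 : Conf b c) : Conf a c := fun i => by
  rcases h1 i with h | h <;> rcases h2 i with h' | h' <;> omega

instance : IsRefl (Fin m → ℤ) Conf := ⟨conf_refl_s7⟩
instance : IsTrans (Fin m → ℤ) Conf := ⟨fun _ _ _ => conf_trans⟩
instance : IsPreorder (Fin m → ℤ) Conf where
  refl := conf_refl_s7
  trans _ _ _ := conf_trans

lemma conf_zero_left (b : Fin m → ℤ) : Conf 0 b := fun i => by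
  simp only [Pi.zero_apply]; omega

lemma conf_zero_right {a : Fin m → ℤ} (h : Conf a 0) : a = 0 := by
  funext i; have := h i; simp only [Pi.zero_apply] at this ⊢; omega

lemma confPWO : (Set.univ : Set (Fin m → ℤ)).PartiallyWellOrderedOn Conf := by
  rw [Set.partiallyWellOrderedOn_iff_exists_lt]
  intro f _
  classical
  set P : ℕ → (Fin m → Bool) := fun k i => decide (0 ≤ f k i) with hP
  obtain ⟨ε, hε⟩ := Finite.exists_infinite_fiber P
  let e := Nat.Subtype.orderIsoOfNat (P ⁻¹' {ε})
  have hmem : ∀ k : ℕ, P ((e k : ℕ)) = ε := fun k => (e k).2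
  have hpwo : (Set.univ : Set (Fin m → ℕ)).IsPWO := Set.isPWO_of_wellQuasiOrderedLE Set.univ
  obtain ⟨i, j, hij, hle⟩ := hpwo.exists_lt (f := fun k c => (f (e k) c).natAbs) (fun _ => Set.mem_univ _)
  refine ⟨e i, e j, ?_, ?_⟩
  · exact_mod_cast e.strictMono hij
  · intro c
    have h1 : (0 ≤ f (e i) c) ↔ (0 ≤ f (e j) c) := by
      have := congrFun ((hmem i).trans (hmem j).symm) c
      simpa [hP, decide_eq_decide] using this
    have h2 : (f (e i) c).natAbs ≤ (f (e j) c).natAbs := hle c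
    omega

end ConfBasic


section MultisetPWO
variable {m : ℕ}

lemma rel_of_forall₂ {α β : Type*} {r : α → β → Prop} :
    ∀ {l₁ : List α} {l₂ : List β}, List.Forall₂ r l₁ l₂ → Multiset.Rel r ↑l₁ ↑l₂ := by
  intro l₁ l₂ h
  induction h with
  | nil => exact Multiset.Rel.zero
  | cons h _ ih => exact Multiset.Rel.cons h ih

lemma multisetPWO (f : ℕ → Multiset (Fin m → ℤ)) : ∃ i j, i < j ∧ Ple (f i) (f j) := by
  have H := Set.PartiallyWellOrderedOn.partiallyWellOrderedOn_sublistForall₂ Conf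
    (confPWO (m := m))
  obtain ⟨i, j, hij, hsl⟩ := H.exists_lt (f := fun k => (f k).toList) (fun k x _ => Set.mem_univ x)
  obtain ⟨l, hfa, hsub⟩ := List.sublistForall₂_iff.mp hsl
  refine ⟨i, j, hij, ⟨(l : Multiset (Fin m → ℤ)), ?_, ?_⟩⟩
  · calc (l : Multiset (Fin m → ℤ)) ≤ ((f j).toList : Multiset (Fin m → ℤ)) :=
        Multiset.coe_le.mpr hsub.subperm
      _ = f j := (f j).coe_toList
  · have := rel_of_forall₂ hfa
    rwa [(f i).coe_toList] at this

end MultisetPWO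

section Decomp

lemma exists_le_of_le_map {α β : Type*} [DecidableEq β] (f : α → β) :
    ∀ (T : Multiset α) (W : Multiset β), W ≤ T.map f → ∃ T' ≤ T, W = T'.map f := by
  intro T
  induction T using Multiset.induction_on with
  | empty =>
    intro W hW
    simp only [Multiset.map_zero, Multiset.le_zero] at hW
    exact ⟨0, le_refl _, by simp [hW]⟩
  | cons a T ih =>
    intro W hW
    rw [Multiset.map_cons] at hW
    by_cases hmem : f a ∈ W
    · obtain ⟨T', hT', hWT⟩ := ih (W.erase (f a)) (Multiset.erase_le_iff_le_cons.mpr hW)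
      refine ⟨a ::ₘ T', Multiset.cons_le_cons a hT', ?_⟩
      rw [Multiset.map_cons, ← hWT, Multiset.cons_erase hmem]
    · refine ih W ?_ |>.imp fun T' ⟨h1, h2⟩ => ⟨h1.trans (Multiset.le_cons_self _ _), h2⟩
      rw [Multiset.le_iff_count] at hW ⊢
      intro b
      rcases eq_or_ne b (f a) with rfl | hb
      · simp [Multiset.count_eq_zero_of_notMem hmem]
      · have := hW b
        rwa [Multiset.count_cons_of_ne hb] at this

lemma exists_fun_of_rel_map {α β γ : Type*} [DecidableEq α] [Nonempty γ]
    {rr : γ → β → Prop} (u : α → β) :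
    ∀ (T : Multiset α), T.Nodup → ∀ V : Multiset γ, Multiset.Rel rr V (T.map u) →
      ∃ g : α → γ, V = T.map g ∧ ∀ j ∈ T, rr (g j) (u j) := by
  intro T
  induction T using Multiset.induction_on with
  | empty =>
    intro _ V h
    rw [Multiset.map_zero, Multiset.rel_zero_right] at h
    exact ⟨fun _ => Classical.arbitrary γ, by simp [h], by simp⟩
  | cons a T ih =>
    intro hnd V h
    rw [Multiset.map_cons, Multiset.rel_cons_right] at h
    obtain ⟨b, V', hb, hrel, rfl⟩ := h
    have hnd' := (Multiset.nodup_cons.mp hnd)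
    obtain ⟨g₀, rfl, hg₀⟩ := ih hnd'.2 V' hrel
    refine ⟨Function.update g₀ a b, ?_, ?_⟩
    · rw [Multiset.map_cons, Function.update_self]
      congr 1
      exact (Multiset.map_congr rfl fun x hx =>
        Function.update_of_ne (ne_of_mem_of_not_mem hx hnd'.1) _ _).symm
    · intro j hj
      rcases Multiset.mem_cons.mp hj with rfl | hj
      · rwa [Function.update_self]
      · rw [Function.update_of_ne (ne_of_mem_of_not_mem hj hnd'.1)]
        exact hg₀ j hj

end Decomp

section Main
variable {n d : ℕ} (A : Fin n → Fin d → ℤ)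

lemma zero_mem_RelLat : (0 : Fin n → ℤ) ∈ RelLat A := by
  simp only [RelLat, Set.mem_setOf_eq, Pi.zero_apply, zero_smul, Finset.sum_const_zero]

def rowsM {r : ℕ} (u : Fin r → Fin n → ℤ) : Multiset (Fin n → ℤ) :=
  (Finset.univ.filter fun j => u j ≠ 0).val.map u

lemma card_rowsM {r : ℕ} (u : Fin r → Fin n → ℤ) :
    Multiset.card (rowsM u) = typeOf u := by
  simp [rowsM, typeOf, Finset.card]

lemma sum_rowsM {r : ℕ} (u : Fin r → Fin n → ℤ) : (rowsM u).sum = ∑ j, u j := by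
  show ∑ j ∈ (Finset.univ.filter fun j => u j ≠ 0), u j = ∑ j, u j
  exact Finset.sum_filter_ne_zero _

lemma rowsM_mem_PA {r : ℕ} (u : Fin r → Fin n → ℤ) (huL : u ∈ LawRel A r)
    (hu0 : u ≠ 0) : rowsM u ∈ PA A := by
  refine ⟨?_, ?_, ?_⟩
  · obtain ⟨j, hj⟩ : ∃ j, u j ≠ 0 := by
      by_contra h
      push_neg at h
      exact hu0 (funext h)
    intro h
    have hmem : u j ∈ rowsM u :=
      Multiset.mem_map_of_mem u (by simpa [Finset.mem_filter] using hj)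
    rw [h] at hmem
    exact Multiset.notMem_zero _ hmem
  · intro v hv
    obtain ⟨j, hj, rfl⟩ := Multiset.mem_map.mp hv
    rw [← Finset.mem_def, Finset.mem_filter] at hj
    exact ⟨huL.1 j, hj.2⟩
  · rw [sum_rowsM, huL.2]

lemma rowsM_mem_minPA {r : ℕ} (u : Fin r → Fin n → ℤ) (hu : u ∈ GraverLift A r) :
    rowsM u ∈ MinPA A := by
  classical
  obtain ⟨huL, hu0, humin⟩ := hu
  refine ⟨rowsM_mem_PA A u huL hu0, ?_⟩
  rintro V' hV' ⟨W, hWle, hrel⟩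
  obtain ⟨T', hT'le, rfl⟩ := exists_le_of_le_map u _ W hWle
  have hnd : T'.Nodup :=
    Multiset.nodup_of_le hT'le (Finset.univ.filter fun j => u j ≠ 0).nodup
  obtain ⟨g, hVg, hg⟩ := exists_fun_of_rel_map u T' hnd V' hrel
  set s : Finset (Fin r) := ⟨T', hnd⟩ with hs
  set v : Fin r → Fin n → ℤ := fun j => if j ∈ s then g j else 0 with hv
  have hmemV' : ∀ j ∈ s, g j ∈ V' := fun j hj =>
    hVg ▸ Multiset.mem_map_of_mem g hj
  have hvL : v ∈ LawRel A r := by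
    constructor
    · intro j
      by_cases hj : j ∈ s
      · simpa only [hv, if_pos hj] using (hV'.2.1 _ (hmemV' j hj)).1
      · simpa only [hv, if_neg hj] using zero_mem_RelLat A
    · have h1 : ∑ j, v j = ∑ j ∈ s, g j := by
        simp only [hv, Finset.sum_ite_mem, Finset.univ_inter]
      have h2 : ∑ j ∈ s, g j = V'.sum := by rw [hVg]; rfl
      rw [h1, h2, hV'.2.2]
  have hv0 : v ≠ 0 := by
    have hcard : 0 < s.card := by
      have : 0 < Multiset.card V' := Multiset.card_pos.mpr hV'.1
      rwa [hVg, Multiset.card_map] at this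
    obtain ⟨j, hj⟩ := Finset.card_pos.mp hcard
    intro h
    have : v j = 0 := congrFun h j
    rw [hv] at this
    simp only [if_pos hj] at this
    exact (hV'.2.1 _ (hmemV' j hj)).2 this
  have hconf : ∀ j, Conf (v j) (u j) := by
    intro j
    by_cases hj : j ∈ s
    · simpa only [hv, if_pos hj] using hg j hj
    · simpa only [hv, if_neg hj] using conf_zero_left (u j)
  have hveq : v = u := humin v hvL hv0 hconf
  have huj : ∀ j ∈ s, u j = g j := by
    intro j hj
    rw [← congrFun hveq j, hv]
    simp [hj]
  have hseq : s = Finset.univ.filter fun j => u j ≠ 0 := by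
    apply Finset.Subset.antisymm
    · intro j hj
      rw [Finset.mem_filter]
      refine ⟨Finset.mem_univ _, ?_⟩
      rw [huj j hj]
      exact (hV'.2.1 _ (hmemV' j hj)).2
    · intro j hj
      rw [Finset.mem_filter] at hj
      by_contra hjs
      have : v j = 0 := by rw [hv]; simp [hjs]
      rw [hveq] at this
      exact hj.2 this
  rw [hVg]
  have : T' = (Finset.univ.filter fun j => u j ≠ 0).val := by rw [← hseq]
  rw [this]
  rw [rowsM]
  apply Multiset.map_congr rfl
  intro j hj
  exact (huj j (by rwa [hseq, Finset.mem_def])).symm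

lemma exists_graver_of_minPA (V : Multiset (Fin n → ℤ)) (hV : V ∈ MinPA A) :
    ∃ r, 2 ≤ r ∧ ∃ u ∈ GraverLift A r, typeOf u = Multiset.card V := by
  classical
  obtain ⟨hPA, hmin⟩ := hV
  set l : List (Fin n → ℤ) := V.toList with hl
  set m : ℕ := l.length with hml
  have hmV : Multiset.card V = m := (Multiset.length_toList V).symm
  set r : ℕ := max 2 m with hr
  have h2r : 2 ≤ r := le_max_left _ _
  have hmr : m ≤ r := le_max_right _ _
  set u : Fin r → Fin n → ℤ := fun j => l.getD ↑j 0 with hu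
  have hu_lt : ∀ (j : Fin r), (j : ℕ) < m → u j ∈ V := by
    intro j hj
    rw [hu]
    simp only
    rw [List.getD_eq_getElem l 0 hj]
    exact Multiset.mem_toList.mp (List.getElem_mem hj)
  have hu_ge : ∀ (j : Fin r), ¬(j : ℕ) < m → u j = 0 := by
    intro j hj
    rw [hu]
    simp only
    exact List.getD_eq_default l 0 (Nat.le_of_not_lt hj)
  have hne_iff : ∀ j : Fin r, u j ≠ 0 ↔ (j : ℕ) < m := by
    intro j
    constructor
    · intro h
      by_contra hc
      exact h (hu_ge j hc)
    · intro h
      exact (hPA.2.1 _ (hu_lt j h)).2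
  set Fu : Finset (Fin r) := Finset.univ.filter fun j => u j ≠ 0 with hFudef
  have hFu : Fu = Finset.univ.map (Fin.castLEEmb hmr) := by
    apply Finset.ext
    intro j
    simp only [hFudef, Finset.mem_filter, Finset.mem_univ, true_and, Finset.mem_map]
    rw [hne_iff j]
    constructor
    · intro h
      exact ⟨⟨(j : ℕ), h⟩, Fin.ext rfl⟩
    · rintro ⟨i, rfl⟩
      exact i.isLt
  have hkey : Fu.val.map u = V := by
    rw [hFu, Finset.map_val, Multiset.map_map, Fin.univ_def]
    show Multiset.map (fun i => u (Fin.castLE hmr i)) ↑(List.finRange m) = V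
    rw [Multiset.map_coe]
    have hcongr : (List.finRange m).map (fun i => u (Fin.castLE hmr i))
        = (List.finRange m).map l.get := by
      apply List.map_congr_left
      intro i _
      rw [hu]
      simp only [Fin.castLE]
      rw [List.getD_eq_getElem l 0 i.isLt]
      exact (List.get_eq_getElem (l := l) (i := i))
    rw [hcongr]
    have h3 : List.map l.get (List.finRange m) = l := List.map_get_finRange l
    rw [h3, hl, Multiset.coe_toList]
  have htype : typeOf u = Multiset.card V := by
    have : Multiset.card (Fu.val.map u) = Fu.card := by
      rw [Multiset.card_map]; rfl
    rw [hkey] at this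
    rw [typeOf, ← hFudef, ← this]
  refine ⟨r, h2r, u, ⟨⟨?_, ?_⟩, ?_, ?_⟩, htype⟩
  · intro j
    by_cases hj : (j : ℕ) < m
    · exact (hPA.2.1 _ (hu_lt j hj)).1
    · rw [hu_ge j hj]; exact zero_mem_RelLat A
  · have h1 : ∑ j, u j = ∑ j ∈ Fu, u j := (Finset.sum_filter_ne_zero _).symm
    have h2 : ∑ j ∈ Fu, u j = V.sum := by rw [← hkey]; rfl
    rw [h1, h2, hPA.2.2]
  · -- u ≠ 0
    have hm0 : 0 < m := by
      rw [← hmV]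
      exact Multiset.card_pos.mpr hPA.1
    intro h
    have hj : ((⟨0, lt_of_lt_of_le two_pos h2r⟩ : Fin r) : ℕ) < m := hm0
    exact ((hne_iff _).mpr hj) (congrFun h _)
  · -- minimality
    intro v hvL hv0 hconf
    set sv : Finset (Fin r) := Finset.univ.filter fun j => v j ≠ 0 with hsv
    have hV'PA : rowsM v ∈ PA A := rowsM_mem_PA A v hvL hv0
    have hsub : sv ⊆ Fu := by
      intro j hj
      rw [hsv, Finset.mem_filter] at hj
      rw [hFudef, Finset.mem_filter]
      refine ⟨Finset.mem_univ _, ?_⟩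
      intro h0
      apply hj.2
      apply conf_zero_right
      rw [← h0]
      exact hconf j
    have hple : Ple (rowsM v) V := by
      refine ⟨sv.val.map u, ?_, ?_⟩
      · rw [← hkey]
        exact Multiset.map_le_map (Finset.val_le_iff.mpr hsub)
      · rw [rowsM, ← hsv]
        rw [Multiset.rel_map]
        exact Multiset.rel_refl_of_refl_on fun j _ => hconf j
    have hVeq : rowsM v = V := hmin _ hV'PA hple
    have hcards : Fu.card ≤ sv.card := by
      have c1 : Multiset.card (rowsM v) = sv.card := by
        rw [rowsM, ← hsv, Multiset.card_map]; rfl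
      have c2 : Multiset.card V = Fu.card := by
        rw [← hkey, Multiset.card_map]; rfl
      rw [hVeq, c2] at c1
      exact le_of_eq c1
    have hseq : sv = Fu := Finset.eq_of_subset_of_card_le hsub hcards
    clear_value u l m r Fu sv
    funext j
    by_cases hj : j ∈ Fu
    · funext i
      have habs : ∀ j' ∈ Fu, (v j' i).natAbs ≤ (u j' i).natAbs := by
        intro j' _
        have := hconf j' i
        omega
      have e1 : ((rowsM v).map fun w => (w i).natAbs).sum
          = ∑ j' ∈ Fu, (v j' i).natAbs := by
        rw [rowsM, ← hsv, hseq, Multiset.map_map]; rfl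
      have e2 : (V.map fun w => (w i).natAbs).sum
          = ∑ j' ∈ Fu, (u j' i).natAbs := by
        rw [← hkey, Multiset.map_map]; rfl
      have hsumeq : ∑ j' ∈ Fu, (v j' i).natAbs = ∑ j' ∈ Fu, (u j' i).natAbs := by
        rw [← e1, ← e2, hVeq]
      have heq : (v j i).natAbs = (u j i).natAbs :=
        (Finset.sum_eq_sum_iff_of_le habs).mp hsumeq j hj
      have hc := hconf j i
      revert heq hc
      generalize v j i = a
      generalize u j i = b
      intro heq hc
      clear * - heq hc
      omega
    · have h1 : u j = 0 := by
        rw [hFudef, Finset.mem_filter] at hj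
        push_neg at hj
        exact hj (Finset.mem_univ _)
      have h2 : v j = 0 := by
        rw [← hseq] at hj
        rw [hsv, Finset.mem_filter] at hj
        push_neg at hj
        exact hj (Finset.mem_univ _)
      rw [h1, h2]

end Main

lemma minPA_finite {n d : ℕ} (A : Fin n → Fin d → ℤ) : (MinPA A).Finite := by
  by_contra hinf
  have hinf' : (MinPA A).Infinite := hinf
  let e := hinf'.natEmbedding
  obtain ⟨i, j, hij, hple⟩ := multisetPWO fun k => (e k : Multiset (Fin n → ℤ))
  have h1 : (e i : Multiset (Fin n → ℤ)) ∈ MinPA A := (e i).2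
  have h2 : (e j : Multiset (Fin n → ℤ)) ∈ MinPA A := (e j).2
  have heq : (e i : Multiset (Fin n → ℤ)) = e j := h2.2 _ h1.1 hple
  exact Nat.ne_of_lt hij (e.injective (Subtype.ext heq))


/-- **Corollary (via Higman's lemma).** `P(A)` has only finitely many minimal elements, and
the Graver complexity `g(A)` (the supremum over `r ≥ 2` of the types of Graver basis
elements of `A^(r)`) is the maximum of their cardinalities. -/
theorem minimal_elements_finite_and_graver_complexity {n d : ℕ}
    (A : Fin n → Fin d → ℤ) (hspan : Submodule.span ℤ (Set.range A) = ⊤) :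
    (MinPA A).Finite ∧
    ∃ g : ℕ,
      (∀ r : ℕ, 2 ≤ r → ∀ u ∈ GraverLift A r, typeOf u ≤ g) ∧
      (∀ g' : ℕ, (∀ r : ℕ, 2 ≤ r → ∀ u ∈ GraverLift A r, typeOf u ≤ g') → g ≤ g') ∧
      (∀ V ∈ MinPA A, Multiset.card V ≤ g) ∧
      (∀ g' : ℕ, (∀ V ∈ MinPA A, Multiset.card V ≤ g') → g ≤ g') := by
  have hfin := minPA_finite A
  refine ⟨hfin, hfin.toFinset.sup Multiset.card, ?_, ?_, ?_, ?_⟩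
  · intro r _ u hu
    have hm := rowsM_mem_minPA A u hu
    rw [← card_rowsM u]
    exact Finset.le_sup (hfin.mem_toFinset.mpr hm)
  · intro g' hg'
    apply Finset.sup_le
    intro V hV
    rw [Set.Finite.mem_toFinset] at hV
    obtain ⟨r, hr2, u, hu, htype⟩ := exists_graver_of_minPA A V hV
    rw [← htype]
    exact hg' r hr2 u hu
  · intro V hV
    exact Finset.le_sup (hfin.mem_toFinset.mpr hV)
  · intro g' hg'
    apply Finset.sup_le
    intro V hV
    exact hg' V (hfin.mem_toFinset.mp hV)
end

section
/- Let Δ be a collection of subsets of {1, …, m}, fix table sizes r_1, …, r_m, and let A_Δ be the 0-1 configuration indexed by the cells of an r_1×…×r_m table whose relation lattice L(A_Δ) consists of all integer r_1×…×r_m tables with vanishing σ-margins for every σ ∈ Δ. Then for every r ≥ 2, under the identification of r×(r_1⋯r_m) tables with integer r_1×…×r_m×r tables, the relation lattice L(A_Δ^(r)) = {(u^(1), …, u^(r)) : u^(i) ∈ L(A_Δ) for all i, Σ_i u^(i) = 0} equals the set of integer r_1×…×r_m×r tables whose τ-margins vanish for every τ in Δ_logit = {{1, …, m}} ∪ {σ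 ∪ {m+1} : σ ∈ Δ}. -/
open Finset

/-- The `σ`-margin of an integer `r_1 × ⋯ × r_m` table `w` vanishes: for every fixed
assignment `x` of the indices in `σ`, the sum of `w` over all cells agreeing with `x` on `σ`
is zero. -/
def MarginZero {m : ℕ} {rr : Fin m → ℕ} (σ : Finset (Fin m))
    (w : ((i : Fin m) → Fin (rr i)) → ℤ) : Prop :=
  ∀ x : (i : Fin m) → Fin (rr i),
    ∑ y : (i : Fin m) → Fin (rr i), (if ∀ i ∈ σ, y i = x i then w y else 0) = 0

/-- The `{1, …, m}`-margin of an integer `r_1 × ⋯ × r_m × r` table `w` vanishes: for every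
cell `x` of the `r_1 × ⋯ × r_m` table, the sum of `w` over the last index is zero. -/
def MarginZeroTop {m : ℕ} {rr : Fin m → ℕ} {r : ℕ}
    (w : ((i : Fin m) → Fin (rr i)) × Fin r → ℤ) : Prop :=
  ∀ x : (i : Fin m) → Fin (rr i),
    ∑ p : ((i : Fin m) → Fin (rr i)) × Fin r, (if p.1 = x then w p else 0) = 0

/-- The `(σ ∪ {m+1})`-margin of an integer `r_1 × ⋯ × r_m × r` table `w` vanishes: for
every fixed assignment `x` of the indices in `σ` and every fixed level `j` of the last
index, the sum of `w` over all cells agreeing with `(x, j)` there is zero. -/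
def MarginZeroCup {m : ℕ} {rr : Fin m → ℕ} {r : ℕ} (σ : Finset (Fin m))
    (w : ((i : Fin m) → Fin (rr i)) × Fin r → ℤ) : Prop :=
  ∀ (x : (i : Fin m) → Fin (rr i)) (j : Fin r),
    ∑ p : ((i : Fin m) → Fin (rr i)) × Fin r,
      (if (∀ i ∈ σ, p.1 i = x i) ∧ p.2 = j then w p else 0) = 0

/-- **Theorem (logit models are higher Lawrence liftings).** If `A_Δ` represents the
hierarchical log-linear model `Δ` for `r_1 × ⋯ × r_m` tables — so that `L(A_Δ)` is the set
of integer tables with vanishing `σ`-margins for all `σ ∈ Δ` — then for every `r ≥ 2`, under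
the identification of `r × (r_1⋯r_m)` tables with `r_1 × ⋯ × r_m × r` tables, the relation
lattice `L(A_Δ^(r)) = {(u^(1), …, u^(r)) : u^(i) ∈ L(A_Δ), Σ_i u^(i) = 0}` equals the set of
integer `r_1 × ⋯ × r_m × r` tables with vanishing `τ`-margins for all `τ` in
`Δ_logit = {{1, …, m}} ∪ {σ ∪ {m+1} : σ ∈ Δ}`. -/
theorem lawrence_lifting_is_logit_model {m : ℕ} (rr : Fin m → ℕ)
    (Δ : Set (Finset (Fin m))) (r : ℕ) (hr : 2 ≤ r) :
    {w : ((i : Fin m) → Fin (rr i)) × Fin r → ℤ |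
        (∀ j : Fin r, ∀ σ ∈ Δ, MarginZero σ (fun x => w (x, j))) ∧
        (∑ j : Fin r, (fun x => w (x, j))) = 0} =
      {w | MarginZeroTop w ∧ ∀ σ ∈ Δ, MarginZeroCup σ w} := by
  ext w
  simp only [Set.mem_setOf_eq]
  have h1 : MarginZeroTop w ↔ (∑ j : Fin r, (fun x => w (x, j))) = 0 := by
    unfold MarginZeroTop
    rw [funext_iff]
    apply forall_congr'
    intro x
    rw [Fintype.sum_prod_type]
    simp [Finset.sum_ite_eq' Finset.univ x, eq_comm]
  have key : ∀ (σ : Finset (Fin m)) (x : (i : Fin m) → Fin (rr i)) (j : Fin r),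
      (∑ p : ((i : Fin m) → Fin (rr i)) × Fin r,
        (if (∀ i ∈ σ, p.1 i = x i) ∧ p.2 = j then w p else 0))
      = ∑ y : (i : Fin m) → Fin (rr i),
          (if ∀ i ∈ σ, y i = x i then w (y, j) else 0) := by
    intro σ x j
    rw [Fintype.sum_prod_type]
    refine Finset.sum_congr rfl fun y _ => ?_
    by_cases h : ∀ i ∈ σ, y i = x i
    · rw [if_pos h]
      have hk : ∀ k : Fin r, (if (∀ i ∈ σ, y i = x i) ∧ k = j then w (y, k) else 0)
          = if k = j then w (y, k) else 0 := fun k => by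
        by_cases hkj : k = j
        · rw [if_pos ⟨h, hkj⟩, if_pos hkj]
        · rw [if_neg (fun hc => hkj hc.2), if_neg hkj]
      simp_rw [hk]
      simp [Finset.sum_ite_eq' Finset.univ j (fun k => w (y, k))]
    · rw [if_neg h]
      refine Finset.sum_eq_zero fun k _ => ?_
      rw [if_neg (fun hc => h hc.1)]
  have h2 : (∀ σ ∈ Δ, MarginZeroCup σ w) ↔
      (∀ j : Fin r, ∀ σ ∈ Δ, MarginZero σ (fun x => w (x, j))) := by
    constructor
    · intro h j σ hσ x
      have := h σ hσ x j
      rwa [key] at this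
    · intro h σ hσ x j
      rw [key]
      exact h j σ hσ x
  rw [h1, h2]
  tauto
end

section
/- Let A consist of n ≥ 2 copies of the vector 1 in ℤ^1. Then the Graver complexity of A equals n and the Markov complexity of A equals 2. -/
open Finset

/-- The `r`-th Lawrence lifting of a configuration `A = (a_1, …, a_n)` in `ℤ^d`:
the configuration of the `r·n` vectors `(a_i ⊗ e_j) ⊕ ε_i` in `ℤ^{dr+n}`,
indexed by pairs `(j, i)`. -/
def Lawrence {n d : ℕ} (A : Fin n → Fin d → ℤ) (r : ℕ) :
    Fin r × Fin n → (Fin r × Fin d) ⊕ Fin n → ℤ := fun p =>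
  Sum.elim (fun q => if q.1 = p.1 then A p.2 q.2 else 0)
    (fun i => if i = p.2 then 1 else 0)

/-- `M` is a Markov basis of the configuration `C = (c_i)_{i ∈ ι}`: a finite subset of the
relation lattice of `C` such that any two nonnegative integer vectors `u, v` with
`Σ u_i c_i = Σ v_i c_i` are connected by a sequence of nonnegative integer vectors
whose consecutive differences lie in `M ∪ (−M)`. -/
def IsMarkovBasis {ι κ : Type*} [Fintype ι] (C : ι → κ → ℤ) (M : Set (ι → ℤ)) : Prop :=
  M.Finite ∧ (∀ m ∈ M, ∑ i, m i • C i = 0) ∧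
    ∀ u v : ι → ℕ, (∑ i, (u i : ℤ) • C i) = (∑ i, (v i : ℤ) • C i) →
      ∃ N : ℕ, ∃ w : Fin (N + 1) → ι → ℕ, w 0 = u ∧ w (Fin.last N) = v ∧
        ∀ t : Fin N, (fun i => ((w t.succ i : ℤ) - (w t.castSucc i : ℤ))) ∈ M ∨
          (fun i => ((w t.castSucc i : ℤ) - (w t.succ i : ℤ))) ∈ M

/-- The type of an element of the relation lattice of `A^(r)`, viewed as an `r × n`
integer table: the number of its nonzero rows. -/
def tableType {r n : ℕ} (u : Fin r × Fin n → ℤ) : ℕ :=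
  (Finset.univ.filter fun j : Fin r => (fun i : Fin n => u (j, i)) ≠ 0).card

lemma relLat_iff {n : ℕ} (m : Fin n → ℤ) :
    m ∈ RelLat (fun _ _ => 1 : Fin n → Fin 1 → ℤ) ↔ ∑ i, m i = 0 := by
  constructor
  · intro h
    have := congrFun h 0
    rw [Finset.sum_apply] at this
    simpa using this
  · intro h
    funext q
    rw [Finset.sum_apply]
    simpa using h


lemma law_sum_inl {n r : ℕ} (m : Fin r × Fin n → ℤ) (j0 : Fin r) (q : Fin 1) :
    (∑ c, m c • Lawrence (fun _ _ => 1 : Fin n → Fin 1 → ℤ) r c) (Sum.inl (j0, q))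
      = ∑ i, m (j0, i) := by
  rw [Finset.sum_apply]
  rw [Fintype.sum_prod_type]
  simp only [Lawrence, Pi.smul_apply, Sum.elim_inl, smul_eq_mul]
  rw [Finset.sum_comm]
  simp [Finset.sum_ite_eq, mul_comm]

lemma law_sum_inr {n r : ℕ} (m : Fin r × Fin n → ℤ) (i0 : Fin n) :
    (∑ c, m c • Lawrence (fun _ _ => 1 : Fin n → Fin 1 → ℤ) r c) (Sum.inr i0)
      = ∑ j, m (j, i0) := by
  rw [Finset.sum_apply, Fintype.sum_prod_type]
  simp only [Lawrence, Pi.smul_apply, Sum.elim_inr, smul_eq_mul]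
  simp [Finset.sum_ite_eq, mul_comm]

lemma law_margins {n r : ℕ} (m : Fin r × Fin n → ℤ) :
    (∑ c, m c • Lawrence (fun _ _ => 1 : Fin n → Fin 1 → ℤ) r c) = 0 ↔
      (∀ j, ∑ i, m (j, i) = 0) ∧ (∀ i, ∑ j, m (j, i) = 0) := by
  constructor
  · intro h
    constructor
    · intro j; rw [← law_sum_inl m j 0, h]; rfl
    · intro i; rw [← law_sum_inr m i, h]; rfl
  · intro ⟨h1, h2⟩
    funext q
    rcases q with ⟨j0, q⟩ | i0
    · rw [law_sum_inl m j0 q]; exact (h1 j0)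
    · rw [law_sum_inr m i0]; exact (h2 i0)

def Bmove {r n : ℕ} (j j' : Fin r) (i i' : Fin n) : Fin r × Fin n → ℤ := fun c =>
  (if c = (j, i) then 1 else 0) + (if c = (j', i') then 1 else 0)
    - (if c = (j, i') then 1 else 0) - (if c = (j', i) then 1 else 0)

def Mset (r n : ℕ) : Set (Fin r × Fin n → ℤ) :=
  Set.range (fun x : Fin r × Fin r × Fin n × Fin n => Bmove x.1 x.2.1 x.2.2.1 x.2.2.2)

lemma aux_exists_lt_of_sum_eq {k : ℕ} (f g : Fin k → ℤ) (h : ∑ i, f i = ∑ i, g i)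
    {i : Fin k} (hi : g i < f i) : ∃ i', f i' < g i' := by
  by_contra hc
  push_neg at hc
  have : ∑ i, g i < ∑ i, f i :=
    Finset.sum_lt_sum (fun j _ => hc j) ⟨i, Finset.mem_univ i, hi⟩
  omega

lemma aux_chain_cons {ι : Type*} (M : Set (ι → ℤ)) (u u' v : ι → ℕ)
    (h1 : (fun i => ((u' i : ℤ) - u i)) ∈ M ∨ (fun i => ((u i : ℤ) - u' i)) ∈ M)
    (h2 : ∃ N : ℕ, ∃ w : Fin (N + 1) → ι → ℕ, w 0 = u' ∧ w (Fin.last N) = v ∧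
        ∀ t : Fin N, (fun i => ((w t.succ i : ℤ) - (w t.castSucc i : ℤ))) ∈ M ∨
          (fun i => ((w t.castSucc i : ℤ) - (w t.succ i : ℤ))) ∈ M) :
    ∃ N : ℕ, ∃ w : Fin (N + 1) → ι → ℕ, w 0 = u ∧ w (Fin.last N) = v ∧
        ∀ t : Fin N, (fun i => ((w t.succ i : ℤ) - (w t.castSucc i : ℤ))) ∈ M ∨
          (fun i => ((w t.castSucc i : ℤ) - (w t.succ i : ℤ))) ∈ M := by
  obtain ⟨N, w, hw0, hwl, hws⟩ := h2
  refine ⟨N + 1, Fin.cons u w, by simp, ?_, ?_⟩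
  · rw [show Fin.last (N+1) = Fin.succ (Fin.last N) by rfl, Fin.cons_succ]; exact hwl
  · intro t
    induction t using Fin.cases with
    | zero => simpa [Fin.cons_succ, hw0] using h1
    | succ j => simpa [Fin.cons_succ, ← Fin.succ_castSucc] using hws j

lemma sum_ite_cell_row {r n : ℕ} (j0 j : Fin r) (i : Fin n) :
    ∑ i0, (if ((j0, i0) : Fin r × Fin n) = (j, i) then (1:ℤ) else 0)
      = if j0 = j then 1 else 0 := by
  simp [Prod.ext_iff, ite_and]

lemma sum_ite_cell_col {r n : ℕ} (i0 i : Fin n) (j : Fin r) :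
    ∑ j0, (if ((j0, i0) : Fin r × Fin n) = (j, i) then (1:ℤ) else 0)
      = if i0 = i then 1 else 0 := by
  simp [Prod.ext_iff, ite_and]

lemma Bmove_row {r n : ℕ} (j j' : Fin r) (i i' : Fin n) (j0 : Fin r) :
    ∑ i0, Bmove j j' i i' (j0, i0) = 0 := by
  simp only [Bmove, Finset.sum_sub_distrib, Finset.sum_add_distrib, sum_ite_cell_row]
  ring

lemma Bmove_col {r n : ℕ} (j j' : Fin r) (i i' : Fin n) (i0 : Fin n) :
    ∑ j0, Bmove j j' i i' (j0, i0) = 0 := by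
  simp only [Bmove, Finset.sum_sub_distrib, Finset.sum_add_distrib, sum_ite_cell_col]
  ring

lemma connect {r n : ℕ} : ∀ k : ℕ, ∀ u v : Fin r × Fin n → ℕ,
    (∀ j, ∑ i, (u (j, i) : ℤ) = ∑ i, (v (j, i) : ℤ)) →
    (∀ i, ∑ j, (u (j, i) : ℤ) = ∑ j, (v (j, i) : ℤ)) →
    (∑ c, ((u c : ℤ) - v c).natAbs) = k →
    ∃ N : ℕ, ∃ w : Fin (N + 1) → Fin r × Fin n → ℕ, w 0 = u ∧ w (Fin.last N) = v ∧
        ∀ t : Fin N, (fun c => ((w t.succ c : ℤ) - (w t.castSucc c : ℤ))) ∈ Mset r n ∨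
          (fun c => ((w t.castSucc c : ℤ) - (w t.succ c : ℤ))) ∈ Mset r n := by
  intro k
  induction k using Nat.strong_induction_on with
  | _ k ih =>
  intro u v hrow hcol hk
  by_cases huv : u = v
  · subst huv
    exact ⟨0, fun _ => u, rfl, rfl, fun t => t.elim0⟩
  -- find a cell where u > v
  have htot : ∑ c : Fin r × Fin n, (u c : ℤ) = ∑ c, (v c : ℤ) := by
    rw [Fintype.sum_prod_type, Fintype.sum_prod_type]
    exact Finset.sum_congr rfl fun j _ => hrow j
  have hex : ∃ c, (v c : ℤ) < u c := by
    by_contra hc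
    push_neg at hc
    have h2 : ∃ c, (u c : ℤ) < v c := by
      obtain ⟨c0, hc0⟩ := Function.ne_iff.mp huv
      refine ⟨c0, lt_of_le_of_ne (hc c0) ?_⟩
      exact_mod_cast hc0
    obtain ⟨c0, hc0⟩ := h2
    have : ∑ c : Fin r × Fin n, (u c : ℤ) < ∑ c, (v c : ℤ) :=
      Finset.sum_lt_sum (fun c _ => hc c) ⟨c0, Finset.mem_univ c0, hc0⟩
    omega
  obtain ⟨⟨j, i⟩, hji⟩ := hex
  -- find i' with u (j,i') < v (j,i')
  obtain ⟨i', hi'⟩ := aux_exists_lt_of_sum_eq (fun i0 => (u (j, i0) : ℤ))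
    (fun i0 => (v (j, i0) : ℤ)) (hrow j) hji
  -- find j' with v (j',i') < u (j',i')
  obtain ⟨j', hj'⟩ := aux_exists_lt_of_sum_eq (fun j0 => (v (j0, i') : ℤ))
    (fun j0 => (u (j0, i') : ℤ)) (hcol i').symm hi'
  have hii' : i ≠ i' := by rintro rfl; omega
  have hjj' : j ≠ j' := by rintro rfl; omega
  have hii2 : i' ≠ i := Ne.symm hii'
  have hjj2 : j' ≠ j := Ne.symm hjj'
  -- the modified table
  set B := Bmove j j' i' i with hB
  have hB1 : B (j, i') = 1 := by simp [hB, Bmove, Prod.ext_iff, hii', hjj', hii2, hjj2]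
  have hB2 : B (j', i) = 1 := by
    simp [hB, Bmove, Prod.ext_iff, hii', hjj', hii2, hjj2]
  have hB3 : B (j, i) = -1 := by simp [hB, Bmove, Prod.ext_iff, hii', hjj', hii2, hjj2]
  have hB4 : B (j', i') = -1 := by
    simp [hB, Bmove, Prod.ext_iff, hii', hjj', hii2, hjj2]
  have hBother : ∀ c, c ≠ (j, i) → c ≠ (j', i') → c ≠ (j, i') → c ≠ (j', i) → B c = 0 := by
    intro c h1 h2 h3 h4; simp [hB, Bmove, h1, h2, h3, h4]
  have hBnn : ∀ c, 0 ≤ (u c : ℤ) + B c := by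
    intro c
    by_cases h1 : c = (j, i)
    · subst h1; rw [hB3]; omega
    by_cases h2 : c = (j', i')
    · subst h2; rw [hB4]; omega
    by_cases h3 : c = (j, i')
    · subst h3; rw [hB1]; positivity
    by_cases h4 : c = (j', i)
    · subst h4; rw [hB2]; positivity
    · rw [hBother c h1 h2 h3 h4]; positivity
  set u' : Fin r × Fin n → ℕ := fun c => ((u c : ℤ) + B c).toNat with hu'
  have hu'cast : ∀ c, (u' c : ℤ) = (u c : ℤ) + B c := fun c => Int.toNat_of_nonneg (hBnn c)
  -- margins of u'
  have hrow' : ∀ j0, ∑ i0, (u' (j0, i0) : ℤ) = ∑ i0, (v (j0, i0) : ℤ) := by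
    intro j0
    simp only [hu'cast]
    rw [Finset.sum_add_distrib]
    rw [show ∑ i0, B (j0, i0) = 0 from Bmove_row j j' i' i j0, add_zero]
    exact hrow j0
  have hcol' : ∀ i0, ∑ j0, (u' (j0, i0) : ℤ) = ∑ j0, (v (j0, i0) : ℤ) := by
    intro i0
    simp only [hu'cast]
    rw [Finset.sum_add_distrib]
    rw [show ∑ j0, B (j0, i0) = 0 from Bmove_col j j' i' i i0, add_zero]
    exact hcol i0
  -- the distance decreases
  have hdist : (∑ c, ((u' c : ℤ) - v c).natAbs) < k := by
    subst hk
    have hsplit : ∀ f : Fin r × Fin n → ℕ,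
        ∑ c, f c = f (j, i) + f (j', i') + f (j, i') + f (j', i)
          + ∑ c ∈ Finset.univ.filter
              (fun c => c ≠ (j, i) ∧ c ≠ (j', i') ∧ c ≠ (j, i') ∧ c ≠ (j', i)), f c := by
      intro f
      have : (Finset.univ : Finset (Fin r × Fin n)) =
          insert (j, i) (insert (j', i') (insert (j, i')
            (insert (j', i) (Finset.univ.filter
              (fun c => c ≠ (j, i) ∧ c ≠ (j', i') ∧ c ≠ (j, i') ∧ c ≠ (j', i)))))) := by
        ext c
        simp only [Finset.mem_univ, Finset.mem_insert, Finset.mem_filter, true_iff, true_and]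
        tauto
      conv_lhs => rw [this]
      rw [Finset.sum_insert (by simp [Prod.ext_iff, hii', hjj', hii2, hjj2]),
          Finset.sum_insert (by simp [Prod.ext_iff, hii', hjj', hii2, hjj2]),
          Finset.sum_insert (by simp [Prod.ext_iff, hii', hjj', hii2, hjj2]),
          Finset.sum_insert (by simp)]
      ring
    rw [hsplit (fun c => ((u' c : ℤ) - v c).natAbs),
        hsplit (fun c => ((u c : ℤ) - v c).natAbs)]
    have hrest : ∑ c ∈ Finset.univ.filter
          (fun c => c ≠ (j, i) ∧ c ≠ (j', i') ∧ c ≠ (j, i') ∧ c ≠ (j', i)),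
          ((u' c : ℤ) - v c).natAbs
        = ∑ c ∈ Finset.univ.filter
          (fun c => c ≠ (j, i) ∧ c ≠ (j', i') ∧ c ≠ (j, i') ∧ c ≠ (j', i)),
          ((u c : ℤ) - v c).natAbs := by
      apply Finset.sum_congr rfl
      intro c hc
      simp only [Finset.mem_filter] at hc
      rw [hu'cast, hBother c hc.2.1 hc.2.2.1 hc.2.2.2.1 hc.2.2.2.2, add_zero]
    rw [hrest]
    have e1 : (u' (j, i) : ℤ) = (u (j, i) : ℤ) - 1 := by rw [hu'cast, hB3]; ring
    have e2 : (u' (j', i') : ℤ) = (u (j', i') : ℤ) - 1 := by rw [hu'cast, hB4]; ring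
    have e3 : (u' (j, i') : ℤ) = (u (j, i') : ℤ) + 1 := by rw [hu'cast, hB1]
    have e4 : (u' (j', i) : ℤ) = (u (j', i) : ℤ) + 1 := by rw [hu'cast, hB2]
    rw [e1, e2, e3, e4]
    omega
  -- recursive call
  have hrec := ih _ hdist u' v hrow' hcol' rfl
  apply aux_chain_cons (Mset r n) u u' v _ hrec
  left
  refine ⟨(j, j', i', i), ?_⟩
  funext c
  rw [hu'cast]
  ring

lemma Bmove_type {r n : ℕ} (j j' : Fin r) (i i' : Fin n) :
    (Finset.univ.filter fun j0 : Fin r =>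
      (fun i0 : Fin n => Bmove j j' i i' (j0, i0)) ≠ 0).card ≤ 2 := by
  have hsub : (Finset.univ.filter fun j0 : Fin r =>
      (fun i0 : Fin n => Bmove j j' i i' (j0, i0)) ≠ 0) ⊆ {j, j'} := by
    intro j0 hj0
    simp only [Finset.mem_filter] at hj0
    by_contra hmem
    simp only [Finset.mem_insert, Finset.mem_singleton, not_or] at hmem
    apply hj0.2
    funext i0
    simp [Bmove, Prod.ext_iff, hmem.1, hmem.2]
  calc _ ≤ ({j, j'} : Finset (Fin r)).card := Finset.card_le_card hsub
    _ ≤ 2 := Finset.card_insert_le _ _ |>.trans (by simp)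

lemma graver_type_le {n r : ℕ} (u : Fin r → Fin n → ℤ)
    (hu : u ∈ GraverLift (fun _ _ => 1 : Fin n → Fin 1 → ℤ) r) : typeOf u ≤ n := by
  classical
  obtain ⟨⟨hrows, hcols⟩, hne, hmin⟩ := hu
  have hrow : ∀ j, ∑ i, u j i = 0 := fun j => (relLat_iff (u j)).mp (hrows j)
  have hcol : ∀ i, ∑ j, u j i = 0 := by
    intro i
    have := congrFun hcols i
    rwa [Finset.sum_apply] at this
  -- a positive entry exists
  have hex : ∃ c : Fin r × Fin n, 0 < u c.1 c.2 := by
    obtain ⟨j0, hj0⟩ := Function.ne_iff.mp hne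
    obtain ⟨i0, hi0⟩ := Function.ne_iff.mp hj0
    rcases lt_or_gt_of_ne (show u j0 i0 ≠ 0 by simpa using hi0) with h | h
    · obtain ⟨i1, hi1⟩ := aux_exists_lt_of_sum_eq (fun _ => (0:ℤ)) (u j0)
        (by simp [hrow j0]) h
      exact ⟨(j0, i1), hi1⟩
    · exact ⟨(j0, i0), h⟩
  -- the step function
  have step : ∀ c : Fin r × Fin n, 0 < u c.1 c.2 →
      ∃ c' : Fin r × Fin n, u c.1 c'.2 < 0 ∧ 0 < u c'.1 c'.2 := by
    rintro ⟨j, i⟩ h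
    obtain ⟨i', hi'⟩ := aux_exists_lt_of_sum_eq (u j) (fun _ => (0:ℤ))
      (by simp [hrow j]) h
    obtain ⟨j', hj'⟩ := aux_exists_lt_of_sum_eq (fun _ => (0:ℤ)) (fun j0 => u j0 i')
      (by simp [hcol i']) hi'
    exact ⟨(j', i'), hi', hj'⟩
  obtain ⟨c0, hc0⟩ := hex
  let P := {c : Fin r × Fin n // 0 < u c.1 c.2}
  let f : P → P := fun c => ⟨(step c.1 c.2).choose, (step c.1 c.2).choose_spec.2⟩
  have hlinkP : ∀ c : P, u c.1.1 (f c).1.2 < 0 := fun c => (step c.1 c.2).choose_spec.1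
  let J : ℕ → Fin r := fun t => (f^[t] ⟨c0, hc0⟩).1.1
  let I : ℕ → Fin n := fun t => (f^[t] ⟨c0, hc0⟩).1.2
  have hpos : ∀ t, 0 < u (J t) (I t) := fun t => (f^[t] ⟨c0, hc0⟩).2
  have hlink : ∀ t, u (J t) (I (t + 1)) < 0 := by
    intro t
    have h1 := hlinkP (f^[t] ⟨c0, hc0⟩)
    have h2 : f (f^[t] ⟨c0, hc0⟩) = f^[t+1] ⟨c0, hc0⟩ := (Function.iterate_succ_apply' f t _).symm
    rw [h2] at h1
    exact h1
  -- pigeonhole on columns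
  have hQex : ∃ b, (∃ a, a < b ∧ I a = I b) ∧ b ≤ n := by
    obtain ⟨x, y, hxy, hIxy⟩ := Fintype.exists_ne_map_eq_of_card_lt
      (fun x : Fin (n+1) => I x.val) (by simp)
    rcases lt_or_gt_of_ne (show x.val ≠ y.val from fun h => hxy (Fin.ext h)) with h | h
    · exact ⟨y.val, ⟨x.val, h, hIxy⟩, by omega⟩
    · exact ⟨x.val, ⟨y.val, h, hIxy.symm⟩, by omega⟩
  have hQ : ∃ b, ∃ a, a < b ∧ I a = I b := ⟨hQex.choose, hQex.choose_spec.1⟩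
  set b := Nat.find hQ with hbdef
  obtain ⟨a, hab, hIab⟩ := Nat.find_spec hQ
  rw [← hbdef] at hab hIab
  have hbn : b ≤ n := le_trans (Nat.find_min' hQ hQex.choose_spec.1) hQex.choose_spec.2
  have hIinj : ∀ s ∈ Finset.Ico a b, ∀ t ∈ Finset.Ico a b, I s = I t → s = t := by
    intro s hs t ht hst
    simp only [Finset.mem_Ico] at hs ht
    rcases lt_trichotomy s t with h | h | h
    · exact absurd ⟨s, h, hst⟩ (Nat.find_min hQ ht.2)
    · exact h
    · exact absurd ⟨t, h, hst.symm⟩ (Nat.find_min hQ hs.2)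
  -- the cyclic shift on [a, b)
  set σ : ℕ → ℕ := fun t => if t + 1 = b then a else t + 1 with hσdef
  have hσmem : ∀ t ∈ Finset.Ico a b, σ t ∈ Finset.Ico a b := by
    intro t ht
    simp only [Finset.mem_Ico] at ht ⊢
    by_cases h : t + 1 = b
    · simp only [hσdef, if_pos h]; omega
    · simp only [hσdef, if_neg h]; omega
  have hIσ : ∀ t ∈ Finset.Ico a b, I (σ t) = I (t + 1) := by
    intro t ht
    by_cases h : t + 1 = b
    · simp only [hσdef, if_pos h, h, hIab]
    · simp only [hσdef, if_neg h]
  have hIσinj : ∀ s ∈ Finset.Ico a b, ∀ t ∈ Finset.Ico a b, I (σ s) = I (σ t) → s = t := by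
    intro s hs t ht h
    have hst := hIinj _ (hσmem s hs) _ (hσmem t ht) h
    simp only [Finset.mem_Ico] at hs ht
    simp only [hσdef] at hst
    by_cases h1 : s + 1 = b <;> by_cases h2 : t + 1 = b
    · omega
    · rw [if_pos h1, if_neg h2] at hst; omega
    · rw [if_neg h1, if_pos h2] at hst; omega
    · rw [if_neg h1, if_neg h2] at hst; omega
  -- the candidate cycle table
  set v : Fin r → Fin n → ℤ := fun j i => ∑ t ∈ Finset.Ico a b,
    ((if J t = j ∧ I t = i then 1 else 0) - (if J t = j ∧ I (σ t) = i then 1 else 0))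
    with hvdef
  -- entry analysis
  have hplus : ∀ j i, ∀ t0 ∈ Finset.Ico a b, J t0 = j → I t0 = i →
      v j i = 1 ∧ 0 < u j i := by
    intro j i t0 ht0 hJ hI
    have hupos : 0 < u j i := hJ ▸ hI ▸ hpos t0
    have hnoneg : ∀ s ∈ Finset.Ico a b, ¬(J s = j ∧ I (σ s) = i) := by
      rintro s hs ⟨hJs, hIs⟩
      have h1 := hlink s
      rw [← hIσ s hs, hJs, hIs] at h1
      omega
    constructor
    · simp only [hvdef]
      rw [Finset.sum_eq_single_of_mem t0 ht0]
      · rw [if_pos ⟨hJ, hI⟩, if_neg (hnoneg t0 ht0)]; norm_num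
      · intro s hs hst
        rw [if_neg (fun hc => hst (hIinj s hs t0 ht0 (hc.2.trans hI.symm))),
            if_neg (hnoneg s hs)]
        ring
    · exact hupos
  have hminus : ∀ j i, (∀ t ∈ Finset.Ico a b, ¬(J t = j ∧ I t = i)) →
      ∀ s0 ∈ Finset.Ico a b, J s0 = j → I (σ s0) = i → v j i = -1 ∧ u j i < 0 := by
    intro j i hnop s0 hs0 hJ hI
    have huneg : u j i < 0 := by
      have h1 := hlink s0
      rw [← hIσ s0 hs0, hJ, hI] at h1
      exact h1
    constructor
    · simp only [hvdef]
      rw [Finset.sum_eq_single_of_mem s0 hs0]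
      · rw [if_neg (hnop s0 hs0), if_pos ⟨hJ, hI⟩]; norm_num
      · intro s hs hst
        rw [if_neg (hnop s hs),
            if_neg (fun hc => hst (hIσinj s hs s0 hs0 (hc.2.trans hI.symm)))]
        ring
    · exact huneg
  have hzero : ∀ j i, (∀ t ∈ Finset.Ico a b, ¬(J t = j ∧ I t = i)) →
      (∀ s ∈ Finset.Ico a b, ¬(J s = j ∧ I (σ s) = i)) → v j i = 0 := by
    intro j i h1 h2
    simp only [hvdef]
    apply Finset.sum_eq_zero
    intro t ht
    rw [if_neg (h1 t ht), if_neg (h2 t ht)]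
    ring
  -- trichotomy
  have htri : ∀ j i, v j i = 0 ∨ (v j i = 1 ∧ 0 < u j i) ∨ (v j i = -1 ∧ u j i < 0) := by
    intro j i
    by_cases h1 : ∃ t ∈ Finset.Ico a b, J t = j ∧ I t = i
    · obtain ⟨t0, ht0, hJ, hI⟩ := h1
      exact Or.inr (Or.inl (hplus j i t0 ht0 hJ hI))
    · push_neg at h1
      by_cases h2 : ∃ s ∈ Finset.Ico a b, J s = j ∧ I (σ s) = i
      · obtain ⟨s0, hs0, hJ, hI⟩ := h2
        exact Or.inr (Or.inr (hminus j i (fun t ht => by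
          have := h1 t ht; tauto) s0 hs0 hJ hI))
      · push_neg at h2
        exact Or.inl (hzero j i (fun t ht => by have := h1 t ht; tauto)
          (fun s hs => by have := h2 s hs; tauto))
  -- v is in the relation lattice
  have hiterm : ∀ (x j : Fin r) (y i : Fin n),
      (if x = j ∧ y = i then (1:ℤ) else 0)
        = (if x = j then 1 else 0) * (if y = i then 1 else 0) := by
    intro x j y i
    by_cases h1 : x = j <;> by_cases h2 : y = i <;> simp [h1, h2]
  have hiterm2 : ∀ (x j : Fin r) (y i : Fin n),
      (if x = j ∧ y = i then (1:ℤ) else 0)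
        = (if y = i then 1 else 0) * (if x = j then 1 else 0) := by
    intro x j y i
    by_cases h1 : x = j <;> by_cases h2 : y = i <;> simp [h1, h2]
  have hvrow : ∀ j, ∑ i, v j i = 0 := by
    intro j
    simp only [hvdef]
    rw [Finset.sum_comm]
    apply Finset.sum_eq_zero
    intro t _
    rw [Finset.sum_sub_distrib]
    simp only [hiterm]
    rw [← Finset.mul_sum, ← Finset.mul_sum]
    rw [Finset.sum_ite_eq, Finset.sum_ite_eq]
    simp
  have hvcol : ∀ i, ∑ j, v j i = 0 := by
    intro i
    rw [hvdef, Finset.sum_comm]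
    have hterm : ∀ t ∈ Finset.Ico a b, (∑ j, ((if J t = j ∧ I t = i then (1:ℤ) else 0)
        - (if J t = j ∧ I (σ t) = i then 1 else 0)))
        = (if I t = i then 1 else 0) - (if I (σ t) = i then 1 else 0) := by
      intro t _
      rw [Finset.sum_sub_distrib]
      congr 1
      · simp only [hiterm2]
        rw [← Finset.mul_sum, Finset.sum_ite_eq]
        simp
      · simp only [hiterm2]
        rw [← Finset.mul_sum, Finset.sum_ite_eq]
        simp
    rw [Finset.sum_congr rfl hterm, Finset.sum_sub_distrib]
    have hbij : ∑ t ∈ Finset.Ico a b, (if I (σ t) = i then (1:ℤ) else 0)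
        = ∑ t ∈ Finset.Ico a b, (if I t = i then (1:ℤ) else 0) := by
      refine Finset.sum_nbij' (i := σ) (j := fun t => if t = a then b - 1 else t - 1)
        (fun t ht => hσmem t ht) ?_ ?_ ?_ (fun t _ => rfl)
      · intro t ht
        simp only [Finset.mem_Ico] at ht ⊢
        split_ifs with h2 <;> omega
      · intro t ht
        simp only [Finset.mem_Ico] at ht
        simp only [hσdef]
        split_ifs <;> omega
      · intro t ht
        simp only [Finset.mem_Ico] at ht
        simp only [hσdef]
        split_ifs <;> omega
    rw [hbij]
    ring
  -- v is nonzero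
  have hva : v (J a) (I a) = 1 :=
    (hplus (J a) (I a) a (by simp [Finset.mem_Ico]; omega) rfl rfl).1
  have hvne : v ≠ 0 := by
    intro h
    rw [h] at hva
    simp at hva
  -- Conf rows
  have hconf : ∀ j, Conf (v j) (u j) := by
    intro j i
    rcases htri j i with h | ⟨h, hu'⟩ | ⟨h, hu'⟩
    · rcases le_or_gt 0 (u j i) with h2 | h2
      · exact Or.inl ⟨le_of_eq h.symm, h ▸ h2⟩
      · exact Or.inr ⟨h ▸ le_of_lt h2, le_of_eq h⟩
    · exact Or.inl ⟨by omega, by omega⟩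
    · exact Or.inr ⟨by omega, by omega⟩
  -- conclude
  have hveq : v = u := hmin v ⟨fun j => (relLat_iff (v j)).mpr (hvrow j),
    funext fun i => by rw [Finset.sum_apply]; exact hvcol i⟩ hvne hconf
  -- the type bound
  have htype : typeOf v ≤ n := by
    rw [typeOf]
    have hsub : (Finset.univ.filter fun j => v j ≠ 0) ⊆ (Finset.Ico a b).image J := by
      intro j hj
      simp only [Finset.mem_filter, Finset.mem_image] at hj ⊢
      by_contra hcon
      push_neg at hcon
      apply hj.2
      funext i
      show v j i = 0
      exact hzero j i (fun t ht hc => hcon t ht hc.1) (fun s hs hc => hcon s hs hc.1)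
    calc (Finset.univ.filter fun j => v j ≠ 0).card
        ≤ ((Finset.Ico a b).image J).card := Finset.card_le_card hsub
      _ ≤ (Finset.Ico a b).card := Finset.card_image_le
      _ = b - a := Nat.card_Ico a b
      _ ≤ n := by omega
  rw [← hveq]
  exact htype

section PartTwo
variable {n : ℕ} [NeZero n]

/-- the `n`-cycle table -/
def cyc (n : ℕ) [NeZero n] : Fin n → Fin n → ℤ := fun j i =>
  (if i = j then 1 else 0) - (if i = j + 1 then 1 else 0)

lemma cycle_aux (hn : 2 ≤ n) (j : Fin n) : j + 1 ≠ j := by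
  intro h
  have h2 : ((j + 1 : Fin n) : ℕ) = j := by rw [h]
  rw [Fin.val_add, Fin.val_one'] at h2
  have h1n : 1 % n = 1 := Nat.mod_eq_of_lt (by omega)
  rw [h1n] at h2
  have hj := j.isLt
  by_cases hlt : j.val + 1 < n
  · rw [Nat.mod_eq_of_lt hlt] at h2; omega
  · have he : j.val + 1 = n := by omega
    rw [he, Nat.mod_self] at h2; omega

lemma cyc_row (j : Fin n) : ∑ i, cyc n j i = 0 := by
  simp only [cyc, Finset.sum_sub_distrib]
  simp

lemma cyc_col (i : Fin n) : ∑ j, cyc n j i = 0 := by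
  simp only [cyc, Finset.sum_sub_distrib]
  rw [show ∑ j, (if i = j + 1 then (1:ℤ) else 0)
      = ∑ j, (if i = j then (1:ℤ) else 0) from
    Fintype.sum_equiv (Equiv.addRight 1) _ _ (fun j => by simp [Equiv.coe_addRight]; exact if_congr Iff.rfl rfl rfl)]
  ring

open Fin.NatCast in
lemma cyc_const (ε : Fin n → ℤ) (h : ∀ j : Fin n, ε (j + 1) = ε j) (j : Fin n) :
    ε j = ε 0 := by
  have key : ∀ m : ℕ, ε ((m : ℕ) : Fin n) = ε 0 := by
    intro m
    induction m with
    | zero => simp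
    | succ m ihm =>
      have : (((m + 1 : ℕ)) : Fin n) = ((m : ℕ) : Fin n) + 1 := by push_cast; ring
      rw [this, h, ihm]
  have := key j.val
  rwa [Fin.cast_val_eq_self] at this

lemma cyc_graver (hn : 2 ≤ n) :
    cyc n ∈ GraverLift (fun _ _ => 1 : Fin n → Fin 1 → ℤ) n := by
  refine ⟨⟨fun j => (relLat_iff _).mpr (cyc_row j), ?_⟩, ?_, ?_⟩
  · funext i
    rw [Finset.sum_apply]
    exact cyc_col i
  · intro h
    have := congrFun (congrFun h 0) 0
    simp [cyc, (cycle_aux hn 0).symm, show n ≠ 1 by omega] at this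
  · rintro v ⟨hvrow, hvcol⟩ hvne hconf
    have hv0 : ∀ j i, i ≠ j → i ≠ j + 1 → v j i = 0 := by
      intro j i h1 h2
      rcases hconf j i with ⟨ha, hb⟩ | ⟨ha, hb⟩ <;>
        · simp only [cyc, if_neg h1, if_neg h2] at * ; omega
    have hvd : ∀ j, 0 ≤ v j j ∧ v j j ≤ 1 := by
      intro j
      rcases hconf j j with ⟨ha, hb⟩ | ⟨ha, hb⟩ <;>
        · simp only [cyc, if_pos rfl, if_neg (cycle_aux hn j).symm] at * ; omega
    have hvs : ∀ j, v j (j + 1) = - v j j := by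
      intro j
      have hr := (relLat_iff _).mp (hvrow j)
      have hsum : ∑ i, v j i = v j j + v j (j + 1) := by
        have hterm : ∀ i, v j i
            = (if i = j then v j j else 0) + (if i = j + 1 then v j (j+1) else 0) := by
          intro i
          by_cases h1 : i = j
          · subst h1; rw [if_pos rfl, if_neg (cycle_aux hn i).symm]; ring
          · by_cases h2 : i = j + 1
            · subst h2; rw [if_neg h1, if_pos rfl]; ring
            · rw [if_neg h1, if_neg h2, hv0 j i h1 h2]; ring
        rw [Finset.sum_congr rfl (fun i _ => hterm i), Finset.sum_add_distrib]
        simp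
      omega
    have hvcol' : ∀ i, ∑ j, v j i = 0 := by
      intro i
      have := congrFun hvcol i
      rwa [Finset.sum_apply] at this
    have hstep : ∀ j : Fin n, v (j + 1) (j + 1) = v j j := by
      intro j
      have hc := hvcol' (j + 1)
      have hterm : ∀ j0, v j0 (j + 1) = (if j0 = j + 1 then v (j+1) (j+1) else 0)
          + (if j0 = j then v j (j+1) else 0) := by
        intro j0
        by_cases h1 : j0 = j + 1
        · subst h1
          rw [if_pos rfl, if_neg (fun h => (cycle_aux hn j) h)]
          ring
        · by_cases h2 : j0 = j
          · subst h2; rw [if_neg h1, if_pos rfl]; ring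
          · rw [if_neg h1, if_neg h2, hv0 j0 (j+1) (fun h => h1 h.symm)
              (fun h => h2 (add_right_cancel h.symm))]
            ring
      rw [Finset.sum_congr rfl (fun j0 _ => hterm j0), Finset.sum_add_distrib] at hc
      simp only [Finset.sum_ite_eq', Finset.mem_univ, if_pos] at hc
      have := hvs j
      omega
    -- the diagonal is constant
    have hconst : ∀ j : Fin n, v j j = v 0 0 :=
      cyc_const (fun j => v j j) hstep
    -- v ≠ 0 forces diagonal = 1
    have hdiag1 : v 0 0 = 1 := by
      by_contra hne1
      have h00 : v 0 0 = 0 := by have := hvd 0; omega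
      apply hvne
      funext j i
      show v j i = 0
      have hjj : v j j = 0 := by rw [hconst j, h00]
      by_cases h1 : i = j
      · subst h1; exact hjj
      · by_cases h2 : i = j + 1
        · subst h2; rw [hvs j, hjj]; ring
        · exact hv0 j i h1 h2
    funext j i
    by_cases h1 : i = j
    · subst h1
      rw [show v i i = 1 from by rw [hconst i, hdiag1]]
      simp [cyc, (cycle_aux hn i).symm]
    · by_cases h2 : i = j + 1
      · subst h2
        rw [hvs j, show v j j = 1 from by rw [hconst j, hdiag1]]
        simp [cyc, h1, cycle_aux hn j]
      · rw [hv0 j i h1 h2]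
        simp [cyc, h1, h2]

lemma cyc_type (hn : 2 ≤ n) : typeOf (cyc n) = n := by
  rw [typeOf]
  rw [Finset.filter_true_of_mem]
  · simp
  · intro j _
    intro h
    have hc : cyc n j j = 0 := by rw [congrFun h j]; rfl
    rw [show cyc n j j = 1 from by simp [cyc, (cycle_aux hn j).symm]] at hc
    exact one_ne_zero hc
end PartTwo

section PartFourAndMain

lemma fin2_01 : (0 : Fin 2) ≠ 1 := by decide

lemma no_type_one {n : ℕ} (hn : 2 ≤ n) :
    ¬ (∀ r : ℕ, 2 ≤ r → ∃ M : Set (Fin r × Fin n → ℤ),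
      IsMarkovBasis (Lawrence (fun _ _ => 1 : Fin n → Fin 1 → ℤ) r) M ∧
        ∀ u ∈ M, tableType u ≤ 1) := by
  intro hcon
  obtain ⟨M, ⟨hfin, hmarg, hconn⟩, htype⟩ := hcon 2 le_rfl
  haveI : NeZero n := ⟨by omega⟩
  have hol : (0 : Fin n) ≠ 1 := by
    intro h
    have h2 := congrArg Fin.val h
    rw [Fin.val_zero, Fin.val_one' n] at h2
    rw [Nat.mod_eq_of_lt (by omega)] at h2
    omega
  -- every element of M is the zero table
  have hM0 : ∀ m ∈ M, m = 0 := by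
    intro m hm
    by_contra hm0
    obtain ⟨⟨j, i⟩, hc⟩ := Function.ne_iff.mp hm0
    have hmargins := (law_margins m).mp (hmarg m hm)
    have hci := hmargins.2 i
    rw [Fin.sum_univ_two] at hci
    have hboth : m (0, i) ≠ 0 ∧ m (1, i) ≠ 0 := by
      have hji : m (j, i) ≠ 0 := by simpa using hc
      have hj01 : j = 0 ∨ j = 1 := by omega
      rcases hj01 with rfl | rfl
      · exact ⟨hji, fun h => hji (by omega)⟩
      · exact ⟨fun h => hji (by omega), hji⟩
    have hsub : ({0, 1} : Finset (Fin 2)) ⊆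
        (Finset.univ.filter fun j0 : Fin 2 => (fun i0 : Fin n => m (j0, i0)) ≠ 0) := by
      intro j0 hj0
      simp only [Finset.mem_insert, Finset.mem_singleton] at hj0
      simp only [Finset.mem_filter, Finset.mem_univ, true_and]
      rcases hj0 with rfl | rfl
      · exact Function.ne_iff.mpr ⟨i, hboth.1⟩
      · exact Function.ne_iff.mpr ⟨i, hboth.2⟩
    have h2 : 2 ≤ tableType m := by
      rw [tableType]
      calc 2 = ({0, 1} : Finset (Fin 2)).card := by decide
        _ ≤ _ := Finset.card_le_card hsub
    have := htype m hm
    omega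
  -- two distinct tables with equal margins
  set u : Fin 2 × Fin n → ℕ :=
    fun c => if c = ((0 : Fin 2), (0 : Fin n)) ∨ c = (1, 1) then 1 else 0 with hudef
  set v : Fin 2 × Fin n → ℕ :=
    fun c => if c = ((0 : Fin 2), (1 : Fin n)) ∨ c = (1, 0) then 1 else 0 with hvdef
  have hdiff : (fun c => ((u c : ℤ) - v c))
      = Bmove (0 : Fin 2) 1 (0 : Fin n) 1 := by
    funext c
    obtain ⟨c1, c2⟩ := c
    have h1 : c1 = 0 ∨ c1 = 1 := by omega
    simp only [hudef, hvdef, Bmove, Prod.mk.injEq]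
    rcases h1 with rfl | rfl <;> by_cases h2 : c2 = 0 <;> by_cases h3 : c2 = 1 <;>
      simp [h2, h3, fin2_01, fin2_01.symm, hol, hol.symm]
  have hmargeq : (∑ c, (u c : ℤ) • Lawrence (fun _ _ => 1 : Fin n → Fin 1 → ℤ) 2 c)
      = ∑ c, (v c : ℤ) • Lawrence (fun _ _ => 1 : Fin n → Fin 1 → ℤ) 2 c := by
    have h0 : (∑ c, ((u c : ℤ) - v c) • Lawrence (fun _ _ => 1 : Fin n → Fin 1 → ℤ) 2 c)
        = 0 := by
      have : ∀ c, ((u c : ℤ) - v c) = Bmove (0 : Fin 2) 1 (0 : Fin n) 1 c :=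
        fun c => congrFun hdiff c
      simp only [this]
      exact (law_margins _).mpr ⟨Bmove_row _ _ _ _, Bmove_col _ _ _ _⟩
    simp only [sub_smul] at h0
    rw [Finset.sum_sub_distrib] at h0
    rw [sub_eq_zero] at h0
    exact h0
  obtain ⟨N, w, hw0, hwl, hsteps⟩ := hconn u v hmargeq
  have hconst : ∀ t : Fin (N + 1), w t = u := by
    intro t
    induction t using Fin.induction with
    | zero => exact hw0
    | succ tt ih =>
      have hstep := hsteps tt
      have heq : w tt.succ = w tt.castSucc := by
        funext c
        rcases hstep with h | h
        · have h0 := congrFun (hM0 _ h) c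
          simp only [Pi.zero_apply] at h0
          omega
        · have h0 := congrFun (hM0 _ h) c
          simp only [Pi.zero_apply] at h0
          omega
      rw [heq, ih]
  have huv : u = v := by rw [← hwl, hconst]
  have h1 : u ((0 : Fin 2), (0 : Fin n)) = 1 := by
    simp [hudef, Prod.ext_iff, show n ≠ 1 by omega]
  have h2 : v ((0 : Fin 2), (0 : Fin n)) = 0 := by
    simp [hvdef, Prod.ext_iff, hol.symm, fin2_01, hol]
  rw [huv, h2] at h1
  exact zero_ne_one h1

end PartFourAndMain


/-- **Product of two simplices.** Let `A` consist of `n ≥ 2` copies of the vector `1` in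
`ℤ^1` (so that `A^(r)` is the vertex set of `Δ^{n−1} × Δ^{r−1}`). Then the Graver
complexity of `A` equals `n` and the Markov complexity of `A` equals `2`. -/
theorem product_of_simplices_complexities (n : ℕ) (hn : 2 ≤ n) :
    -- the Graver complexity equals n
    (∀ r : ℕ, 2 ≤ r → ∀ u ∈ GraverLift (fun _ _ => 1 : Fin n → Fin 1 → ℤ) r,
      typeOf u ≤ n) ∧
    (∃ r : ℕ, 2 ≤ r ∧ ∃ u ∈ GraverLift (fun _ _ => 1 : Fin n → Fin 1 → ℤ) r,
      typeOf u = n) ∧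
    -- the Markov complexity equals 2
    (∀ r : ℕ, 2 ≤ r → ∃ M : Set (Fin r × Fin n → ℤ),
      IsMarkovBasis (Lawrence (fun _ _ => 1 : Fin n → Fin 1 → ℤ) r) M ∧
        ∀ u ∈ M, tableType u ≤ 2) ∧
    ¬ (∀ r : ℕ, 2 ≤ r → ∃ M : Set (Fin r × Fin n → ℤ),
      IsMarkovBasis (Lawrence (fun _ _ => 1 : Fin n → Fin 1 → ℤ) r) M ∧
        ∀ u ∈ M, tableType u ≤ 1) := by
  haveI : NeZero n := ⟨by omega⟩
  refine ⟨fun r _ u hu => graver_type_le u hu,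
    ⟨n, hn, cyc n, cyc_graver hn, cyc_type hn⟩, ?_, no_type_one hn⟩
  intro r hr
  refine ⟨Mset r n, ⟨Set.finite_range _, ?_, ?_⟩, ?_⟩
  · rintro m ⟨⟨j, j', i, i'⟩, rfl⟩
    exact (law_margins _).mpr ⟨Bmove_row j j' i i', Bmove_col j j' i i'⟩
  · intro uu vv h
    have h0 : (∑ c, ((uu c : ℤ) - vv c) • Lawrence (fun _ _ => 1 : Fin n → Fin 1 → ℤ) r c)
        = 0 := by
      simp only [sub_smul]
      rw [Finset.sum_sub_distrib, h, sub_self]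
    have hm := (law_margins (fun c => (uu c : ℤ) - vv c)).mp h0
    have hrow : ∀ j, ∑ i, (uu (j, i) : ℤ) = ∑ i, (vv (j, i) : ℤ) := by
      intro j
      rw [← sub_eq_zero, ← Finset.sum_sub_distrib]
      exact hm.1 j
    have hcol : ∀ i, ∑ j, (uu (j, i) : ℤ) = ∑ j, (vv (j, i) : ℤ) := by
      intro i
      rw [← sub_eq_zero, ← Finset.sum_sub_distrib]
      exact hm.2 i
    exact connect _ uu vv hrow hcol rfl
  · rintro m ⟨⟨j, j', i, i'⟩, rfl⟩
    exact Bmove_type j j' i i'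
end

section
/- Let A = (1, 2, 1) ⊂ ℤ^1. The 4×3 table with rows (0, −1, 2), (2, −1, 0), (−1, 1, −1), (−1, 1, −1) is an element of the Graver basis of A^(4), but the 3×3 table with rows (0, −1, 2), (2, −1, 0), (−2, 2, −2) is not an element of the Graver basis of A^(3). -/
open Finset

lemma relA_iff (u : Fin 3 → ℤ) :
    u ∈ RelLat (![![1], ![2], ![1]] : Fin 3 → Fin 1 → ℤ) ↔ u 0 + 2 * u 1 + u 2 = 0 := by
  simp only [RelLat, Set.mem_setOf_eq, Fin.sum_univ_three]
  constructor
  · intro h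
    have h0 := congrFun h 0
    simp [Pi.smul_apply, smul_eq_mul] at h0
    omega
  · intro h
    funext k
    fin_cases k
    simp [Pi.smul_apply, smul_eq_mul]
    omega

/-- **Example.** For `A = (1, 2, 1)` in `ℤ^1`, the `4 × 3` table with rows
`(0,−1,2), (2,−1,0), (−1,1,−1), (−1,1,−1)` is in the Graver basis of `A^(4)`, but the
`3 × 3` table with rows `(0,−1,2), (2,−1,0), (−2,2,−2)` is not in the Graver basis of
`A^(3)`. -/
theorem repeated_rows_example :
    (![![0, -1, 2], ![2, -1, 0], ![-1, 1, -1], ![-1, 1, -1]] : Fin 4 → Fin 3 → ℤ) ∈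
      GraverLift (![![1], ![2], ![1]] : Fin 3 → Fin 1 → ℤ) 4 ∧
    (![![0, -1, 2], ![2, -1, 0], ![-2, 2, -2]] : Fin 3 → Fin 3 → ℤ) ∉
      GraverLift (![![1], ![2], ![1]] : Fin 3 → Fin 1 → ℤ) 3 := by
  constructor
  · refine ⟨⟨?_, ?_⟩, ?_, ?_⟩
    · intro j
      fin_cases j <;> rw [relA_iff] <;> decide
    · decide
    · intro h
      have := congrFun (congrFun h 0) 1
      norm_num at this
    · intro v hv hvne hconf
      obtain ⟨hrow, hsum⟩ := hv
      have e0 := (relA_iff (v 0)).mp (hrow 0)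
      have e1 := (relA_iff (v 1)).mp (hrow 1)
      have e2 := (relA_iff (v 2)).mp (hrow 2)
      have e3 := (relA_iff (v 3)).mp (hrow 3)
      have s0 := congrFun hsum 0
      have s1 := congrFun hsum 1
      have s2 := congrFun hsum 2
      simp only [Fin.sum_univ_four, Pi.add_apply, Pi.zero_apply] at s0 s1 s2
      have c00 := hconf 0 0; have c01 := hconf 0 1; have c02 := hconf 0 2
      have c10 := hconf 1 0; have c11 := hconf 1 1; have c12 := hconf 1 2
      have c20 := hconf 2 0; have c21 := hconf 2 1; have c22 := hconf 2 2
      have c30 := hconf 3 0; have c31 := hconf 3 1; have c32 := hconf 3 2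
      simp only [Matrix.cons_val_zero, Matrix.cons_val_one, Matrix.cons_val_two,
        Matrix.cons_val_three, Matrix.head_cons, Matrix.tail_cons] at c00 c01 c02 c10 c11 c12 c20 c21 c22 c30 c31 c32
      by_cases hz : v 0 1 = 0
      · exfalso
        apply hvne
        have z00 : v 0 0 = 0 := by omega
        have z01 : v 0 1 = 0 := hz
        have z02 : v 0 2 = 0 := by omega
        have z10 : v 1 0 = 0 := by omega
        have z11 : v 1 1 = 0 := by omega
        have z12 : v 1 2 = 0 := by omega
        have z20 : v 2 0 = 0 := by omega
        have z21 : v 2 1 = 0 := by omega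
        have z22 : v 2 2 = 0 := by omega
        have z30 : v 3 0 = 0 := by omega
        have z31 : v 3 1 = 0 := by omega
        have z32 : v 3 2 = 0 := by omega
        funext j i
        fin_cases j <;> fin_cases i
        exacts [z00, z01, z02, z10, z11, z12, z20, z21, z22, z30, z31, z32]
      have h00 : v 0 0 = 0 := by omega
      have h01 : v 0 1 = -1 := by omega
      have h02 : v 0 2 = 2 := by omega
      have h10 : v 1 0 = 2 := by omega
      have h11 : v 1 1 = -1 := by omega
      have h12 : v 1 2 = 0 := by omega
      have h20 : v 2 0 = -1 := by omega
      have h21 : v 2 1 = 1 := by omega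
      have h22 : v 2 2 = -1 := by omega
      have h30 : v 3 0 = -1 := by omega
      have h31 : v 3 1 = 1 := by omega
      have h32 : v 3 2 = -1 := by omega
      funext j i
      fin_cases j <;> fin_cases i
      exacts [h00, h01, h02, h10, h11, h12, h20, h21, h22, h30, h31, h32]
  · intro hG
    obtain ⟨-, -, hmin⟩ := hG
    have hv : (![![0, -1, 2], ![0, 0, 0], ![0, 1, -2]] : Fin 3 → Fin 3 → ℤ) ∈
        LawRel (![![1], ![2], ![1]] : Fin 3 → Fin 1 → ℤ) 3 := by
      constructor
      · intro j
        fin_cases j <;> rw [relA_iff] <;> decide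
      · decide
    have h2 := hmin _ hv (by
        intro h
        have := congrFun (congrFun h 0) 1
        norm_num at this)
      (by intro j i; fin_cases j <;> fin_cases i <;> decide)
    have := congrFun (congrFun h2 1) 0
    norm_num at this
end
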